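/- arXiv:1811.12754 — 3 statements merged into one kernel-verified Lean document; each statement's English description precedes it below -/
import Mathlib

section
/- Let (E,ℒ,𝒜) be a weakly left-resolving, normal labelled space. Then Γ = {(ξ^{αγ}, |α|−|β|, η^{βγ}) ∈ T × ℤ × T : H_{[α]γ}(ξ^{αγ}) = H_{[β]γ}(η^{βγ})} is a groupoid with product (ξ,m,η)·(η,n,ρ) = (ξ,m+n,ρ) and inverse (ξ,m,η)^{−1} = (η,−m,ξ); in particular, Γ is closed under the product: if (ξ,m,η) ∈ Γ and (η,n,ρ) ∈ Γ, then (ξ,m+n,ρ) ∈ Γ. -/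
open Classical

universe u v w

/-! ## Words over an alphabet -/

/-- Finite-or-infinite words over the alphabet `A`: `Sum.inl l` is the finite word `l`
(with `[]` playing the role of the empty word `ω`), and `Sum.inr f` is the infinite word `f`. -/
abbrev Word (A : Type w) := List A ⊕ (ℕ → A)

/-- The length `|α| ∈ ℕ∞` of a word. -/
def wlength {A : Type w} : Word A → ℕ∞ :=
  Sum.elim (fun l => (l.length : ℕ∞)) fun _ => ⊤

/-- The finite prefix `α_{1,n}` of a word `α`. -/
def wprefix {A : Type w} : Word A → ℕ → List A :=
  Sum.elim (fun l n => l.take n) fun f n => List.ofFn fun i : Fin n => f i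

/-- Concatenation `αβ` of a finite word `α` with a word `β`. -/
def wappend {A : Type w} (α : List A) : Word A → Word A :=
  Sum.elim (fun l => Sum.inl (α ++ l)) fun f =>
    Sum.inr fun n => if h : n < α.length then α.get ⟨n, h⟩ else f (n - α.length)

/-- `β` is a beginning (finite prefix) of the word `α`. -/
def WPrefix {A : Type w} (β : List A) : Word A → Prop :=
  Sum.elim (fun l => β <+: l) fun f => β = List.ofFn fun i : Fin β.length => f i

/-! ## Triples -/

/-- Formal triples `(α, X, β)` together with a zero element; the inverse semigroup `S`
of a labelled space consists of such elements. -/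
inductive Tr (V : Type u) (A : Type w) where
  | zero : Tr V A
  | mk : List A → Set V → List A → Tr V A

/-- The involution `(α,A,β)* = (β,A,α)` (fixing `0`). -/
def Tr.tstar {V : Type u} {A : Type w} : Tr V A → Tr V A
  | .zero => .zero
  | .mk α X β => .mk β X α

/-! ## Labelled spaces -/

/-- The data of a labelled space `(E, ℒ, 𝒜)`: a directed graph on nonempty vertex/edge
sets, a surjective labelling map onto the alphabet `A`, and a family `𝒜` of subsets
of the vertex set. -/
structure LblSp (V : Type u) (E : Type v) (A : Type w) where
  src : E → V
  rng : E → V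
  lab : E → A
  lab_surj : Function.Surjective lab
  nonempty_V : Nonempty V
  nonempty_E : Nonempty E
  𝒜 : Set (Set V)

namespace LblSp

variable {V : Type u} {Ed : Type v} {A : Type w} (Λ : LblSp V Ed A)

/-- `α ≠ ω` is the label of some finite path of the graph. -/
def IsPathLabel (α : List A) : Prop :=
  ∃ l : List Ed, l ≠ [] ∧ List.Chain' (fun e f => Λ.rng e = Λ.src f) l ∧ l.map Λ.lab = α

/-- `ℒ^*`: the finite labelled paths, together with the empty word. -/
def LStar : Set (List A) := {α | α = [] ∨ Λ.IsPathLabel α}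

/-- `ℒ^∞`: the infinite labelled paths. -/
def LInfty : Set (ℕ → A) :=
  {f | ∃ e : ℕ → Ed, (∀ n, Λ.rng (e n) = Λ.src (e (n + 1))) ∧ ∀ n, Λ.lab (e n) = f n}

/-- `ℒ^{≤∞} = ℒ^* ∪ ℒ^∞`, as a predicate on `Word A`. -/
def IsWordW : Word A → Prop := Sum.elim (· ∈ Λ.LStar) (· ∈ Λ.LInfty)

/-- The relative range `r(X, α)` (with `r(X, ω) = X`). -/
noncomputable def relRange (X : Set V) (α : List A) : Set V :=
  if α = [] then X
  else {v | ∃ (l : List Ed) (h : l ≠ []), List.Chain' (fun e f => Λ.rng e = Λ.src f) l ∧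
        l.map Λ.lab = α ∧ Λ.src (l.head h) ∈ X ∧ Λ.rng (l.getLast h) = v}

/-- The range `r(α) = r(E⁰, α)`. -/
noncomputable def rangeL (α : List A) : Set V := Λ.relRange Set.univ α

/-- `𝒜^α = {X ∈ 𝒜 : X ⊆ r(α)}`. -/
noncomputable def Aset (α : List A) : Set (Set V) := {X | X ∈ Λ.𝒜 ∧ X ⊆ Λ.rangeL α}

/-- `(E, ℒ, 𝒜)` is a labelled space: `𝒜` is closed under finite intersections and
unions, contains all ranges `r(α)` for `α ∈ ℒ^{≥1}`, and is closed under relative ranges. -/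
structure IsLS : Prop where
  inter_mem : ∀ X ∈ Λ.𝒜, ∀ Y ∈ Λ.𝒜, X ∩ Y ∈ Λ.𝒜
  union_mem : ∀ X ∈ Λ.𝒜, ∀ Y ∈ Λ.𝒜, X ∪ Y ∈ Λ.𝒜
  range_mem : ∀ α ∈ Λ.LStar, α ≠ [] → Λ.rangeL α ∈ Λ.𝒜
  relRange_mem : ∀ X ∈ Λ.𝒜, ∀ α ∈ Λ.LStar, Λ.relRange X α ∈ Λ.𝒜

/-- A weakly left-resolving labelled space. -/
structure IsWLR : Prop where
  toIsLS : Λ.IsLS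
  wlr : ∀ X ∈ Λ.𝒜, ∀ Y ∈ Λ.𝒜, ∀ α ∈ Λ.LStar, α ≠ [] →
    Λ.relRange (X ∩ Y) α = Λ.relRange X α ∩ Λ.relRange Y α

/-- A weakly left-resolving normal labelled space. -/
structure IsNormal : Prop where
  toIsWLR : Λ.IsWLR
  sdiff_mem : ∀ X ∈ Λ.𝒜, ∀ Y ∈ Λ.𝒜, X \ Y ∈ Λ.𝒜

/-! ## The inverse semigroup `S` -/

/-- The underlying set of the inverse semigroup
`S = {(α,A,β) : α, β ∈ ℒ^*, A ∈ 𝒜^α ∩ 𝒜^β, A ≠ ∅} ∪ {0}`. -/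
def SSet : Set (Tr V A) :=
  {t | t = Tr.zero ∨ ∃ α X β, t = Tr.mk α X β ∧ α ∈ Λ.LStar ∧ β ∈ Λ.LStar ∧
    X ∈ Λ.Aset α ∧ X ∈ Λ.Aset β ∧ X.Nonempty}

/-- The semilattice of idempotents `E(S) = {(α,A,α)} ∪ {0}`. -/
def ESet : Set (Tr V A) :=
  {t | t = Tr.zero ∨ ∃ α X, t = Tr.mk α X α ∧ α ∈ Λ.LStar ∧ X ∈ Λ.Aset α ∧ X.Nonempty}

/-- The product of `S`. -/
noncomputable def tmul : Tr V A → Tr V A → Tr V A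
  | Tr.zero, _ => Tr.zero
  | Tr.mk _ _ _, Tr.zero => Tr.zero
  | Tr.mk α X β, Tr.mk γ Y δ =>
    if β <+: γ ∧ (Λ.relRange X (γ.drop β.length) ∩ Y).Nonempty then
      Tr.mk (α ++ γ.drop β.length) (Λ.relRange X (γ.drop β.length) ∩ Y) δ
    else if γ <+: β ∧ (X ∩ Λ.relRange Y (β.drop γ.length)).Nonempty then
      Tr.mk α (X ∩ Λ.relRange Y (β.drop γ.length)) (δ ++ β.drop γ.length)
    else Tr.zero

/-! ## Filters in `E(S)`, characters, and the tight spectrum -/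

/-- A filter in `E(S)`: a nonempty subset of `E(S) ∖ {0}` closed under products and
upward closed in the natural order (`p ≤ q ↔ pq = p`). -/
def IsFilterES (ξ : Set (Tr V A)) : Prop :=
  ξ.Nonempty ∧ (∀ t ∈ ξ, t ∈ Λ.ESet ∧ t ≠ Tr.zero) ∧
  (∀ p ∈ ξ, ∀ q ∈ ξ, Λ.tmul p q ∈ ξ) ∧
  (∀ p ∈ ξ, ∀ q ∈ Λ.ESet, Λ.tmul p q = p → q ∈ ξ)

/-- An ultrafilter in `E(S)`. -/
def IsUltraES (ξ : Set (Tr V A)) : Prop :=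
  Λ.IsFilterES ξ ∧ ∀ ζ, Λ.IsFilterES ζ → ξ ⊆ ζ → ξ = ζ

/-- The character (indicator function) of a filter. -/
noncomputable def charOf (_Λ : LblSp V Ed A) (ξ : Set (Tr V A)) : Tr V A → Bool :=
  fun t => if t ∈ ξ then true else false

/-- A character of `E(S)`: a nonzero, zero- and meet-preserving `{0,1}`-valued map on
`E(S)` (encoded as a map on triples vanishing outside `E(S)`). -/
def IsChar (φ : Tr V A → Bool) : Prop :=
  (∃ e, φ e = true) ∧ (∀ e, e ∉ Λ.ESet → φ e = false) ∧ φ Tr.zero = false ∧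
  ∀ e ∈ Λ.ESet, ∀ f ∈ Λ.ESet, φ (Λ.tmul e f) = (φ e && φ f)

/-- The tight spectrum `Ê_tight`: the closure, within the space of characters with the
topology of pointwise convergence, of the set of characters of ultrafilters. -/
def tightSpectrum : Set (Tr V A → Bool) :=
  {φ | Λ.IsChar φ} ∩ closure {φ | ∃ ξ, Λ.IsUltraES ξ ∧ φ = Λ.charOf ξ}

/-- A tight filter: a filter whose character lies in the tight spectrum. -/
def IsTightFilter (ξ : Set (Tr V A)) : Prop :=
  Λ.IsFilterES ξ ∧ Λ.charOf ξ ∈ Λ.tightSpectrum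

/-- `ξ_{|β|} = {B : (β, B, β) ∈ ξ}`, the filter of `ξ` at level `β`. -/
def filterAt (_Λ : LblSp V Ed A) (ξ : Set (Tr V A)) (β : List A) : Set (Set V) :=
  {B | Tr.mk β B β ∈ ξ}

/-- `α` is the word associated with the filter `ξ` (i.e. `ξ = ξ^α`): the nonempty finite
beginnings of `α` are exactly the words appearing in elements of `ξ`. -/
def HasWord (_Λ : LblSp V Ed A) (ξ : Set (Tr V A)) (α : Word A) : Prop :=
  ∀ β : List A, β ≠ [] → ((∃ B, Tr.mk β B β ∈ ξ) ↔ WPrefix β α)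

/-! ## Filters and ultrafilters in `𝒜^β` -/

/-- A filter in the Boolean algebra `𝒜^β`. -/
def IsFilterAset (β : List A) (F : Set (Set V)) : Prop :=
  F.Nonempty ∧ F ⊆ Λ.Aset β ∧ (∀ X ∈ F, X.Nonempty) ∧
  (∀ X ∈ F, ∀ Y ∈ F, X ∩ Y ∈ F) ∧ (∀ X ∈ F, ∀ Y ∈ Λ.Aset β, X ⊆ Y → Y ∈ F)

/-- An ultrafilter in `𝒜^β` (an element of `X_β`). -/
def IsUltraAset (β : List A) (F : Set (Set V)) : Prop :=
  Λ.IsFilterAset β F ∧ ∀ G, Λ.IsFilterAset β G → F ⊆ G → F = G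

/-- The gluing map `g_{(α)β}(F) = {C ∩ r(αβ) : C ∈ F}` on ultrafilters. -/
noncomputable def gmap (α β : List A) (F : Set (Set V)) : Set (Set V) :=
  {X | ∃ C ∈ F, X = C ∩ Λ.rangeL (α ++ β)}

/-- The cutting map `h_{[α]β}(F) = {C ∈ 𝒜^β : D ⊆ C for some D ∈ F}` on ultrafilters. -/
noncomputable def hmap (α β : List A) (F : Set (Set V)) : Set (Set V) :=
  {C | C ∈ Λ.Aset β ∧ ∃ D ∈ F, D ⊆ C}

/-! ## Cutting and gluing of (tight) filters in `E(S)` -/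

/-- The cutting map `H_{[α]β} : T^{αβ} → T^{(α)β}` (word-free formulation): the filter
whose family is `η_n = h_{[α]β_{1,n}}(ξ_{n+|α|})`; `H_{[ω]β}` is the identity. -/
noncomputable def Hcut (α : List A) (ξ : Set (Tr V A)) : Set (Tr V A) :=
  if α = [] then ξ
  else {t | ∃ δ B, t = Tr.mk δ B δ ∧ B ∈ Λ.Aset δ ∧
        ∃ D, Tr.mk (α ++ δ) D (α ++ δ) ∈ ξ ∧ D ⊆ B}

/-- The gluing map `G_{(α)β} : T^{(α)β} → T^{αβ}` (word-free formulation): the filter with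
family `η_{|α|+n} = g_{(α)β_{1,n}}(ξ_n)` for `n ≥ 1` and `η_i = f_{α_{1,i}[…]}(…)` for
`i ≤ |α|`, with the two cases according to whether the word of `ξ` is empty (`β = ω`)
or not; `G_{(ω)β}` is the identity. -/
noncomputable def Gglue (α : List A) (ξ : Set (Tr V A)) : Set (Tr V A) :=
  if α = [] then ξ
  else if ∃ (δ : List A) (B : Set V), δ ≠ [] ∧ Tr.mk δ B δ ∈ ξ then
    {t | ∃ δ B, t = Tr.mk δ B δ ∧
      ((α <+: δ ∧ α ≠ δ ∧ ∃ C, Tr.mk (δ.drop α.length) C (δ.drop α.length) ∈ ξ ∧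
          B = C ∩ Λ.rangeL δ) ∨
       (δ <+: α ∧ B ∈ Λ.Aset δ ∧ ∃ (b : A) (C : Set V), Tr.mk [b] C [b] ∈ ξ ∧
          Λ.relRange B (α.drop δ.length ++ [b]) = C ∩ Λ.rangeL (α ++ [b])))}
  else
    {t | ∃ δ B, t = Tr.mk δ B δ ∧ δ <+: α ∧ B ∈ Λ.Aset δ ∧
      ∃ C, Tr.mk [] C [] ∈ ξ ∧ Λ.relRange B (α.drop δ.length) = C ∩ Λ.rangeL α}

/-- `T^β`: the set of tight filters with associated word `β`. -/
def TWord (β : Word A) : Set (Set (Tr V A)) :=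
  {ξ | Λ.IsTightFilter ξ ∧ Λ.HasWord ξ β}

/-- `T^{(α)β} = {ξ ∈ T^β : r(α) ∈ ξ_0}` (equal to `T^β` when `α = ω`), the domain of the
gluing map `G_{(α)β}`. -/
def TGlueDom (α : List A) (β : Word A) : Set (Set (Tr V A)) :=
  {ξ | Λ.IsTightFilter ξ ∧ Λ.HasWord ξ β ∧ (α ≠ [] → Tr.mk [] (Λ.rangeL α) [] ∈ ξ)}

/-! ## The groupoid `Γ` -/

/-- The defining relation of
`Γ = {(ξ^{aγ}, |a|-|b|, η^{bγ}) ∈ T × ℤ × T : H_{[a]γ}(ξ^{aγ}) = H_{[b]γ}(η^{bγ})}`. -/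
def InGamma (η : Set (Tr V A)) (m : ℤ) (ξ : Set (Tr V A)) : Prop :=
  ∃ (a b : List A) (γ : Word A), a ∈ Λ.LStar ∧ b ∈ Λ.LStar ∧ Λ.IsWordW γ ∧
    η ∈ Λ.TWord (wappend a γ) ∧ ξ ∈ Λ.TWord (wappend b γ) ∧
    m = (a.length : ℤ) - (b.length : ℤ) ∧ Λ.Hcut a η = Λ.Hcut b ξ

/-- `Γ` as a set of raw triples. -/
def GammaRaw : Set (Set (Tr V A) × ℤ × Set (Tr V A)) :=
  {p | Λ.InGamma p.1 p.2.1 p.2.2}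

/-- The basic set `Z_{s,e:e₁,…,eₙ}` of `Γ` (raw version), for `s = (μ, X, ν)`:
triples `(η^{μγ}, |μ|-|ν|, ξ^{νγ}) ∈ Γ` with `e ∈ ξ`, `eᵢ ∉ ξ` and
`H_{[μ]γ}(η) = H_{[ν]γ}(ξ)`. -/
noncomputable def ZrawGen (μ ν : List A) (e : Tr V A) (es : List (Tr V A)) :
    Set (Set (Tr V A) × ℤ × Set (Tr V A)) :=
  {p | Λ.InGamma p.1 p.2.1 p.2.2 ∧ p.2.1 = (μ.length : ℤ) - (ν.length : ℤ) ∧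
       e ∈ p.2.2 ∧ (∀ f ∈ es, f ∉ p.2.2) ∧
       ∃ γ : Word A, Λ.HasWord p.1 (wappend μ γ) ∧ Λ.HasWord p.2.2 (wappend ν γ) ∧
         Λ.Hcut μ p.1 = Λ.Hcut ν p.2.2}

/-- `Z_s = Z_{s, s*s}` for `s = (μ, X, ν)` (raw version). -/
noncomputable def Zraw (μ : List A) (X : Set V) (ν : List A) :
    Set (Set (Tr V A) × ℤ × Set (Tr V A)) :=
  Λ.ZrawGen μ ν (Tr.mk ν X ν) []

/-- The basic set `V_{e:e₁,…,eₙ} = U_{e:e₁,…,eₙ} ∩ T` of the tight filter space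
(raw version). -/
def VrawGen (e : Tr V A) (es : List (Tr V A)) : Set (Set (Tr V A)) :=
  {ξ | Λ.IsTightFilter ξ ∧ e ∈ ξ ∧ ∀ f ∈ es, f ∉ ξ}

/-- The shift map `σ : T^{(1)} → T`, `σ(ξ^{aγ}) = H_{[a]γ}(ξ^{aγ})` (extended by the
identity off its domain). -/
noncomputable def sigmaMap (ξ : Set (Tr V A)) : Set (Tr V A) :=
  if h : ∃ a : A, ∃ B : Set V, Tr.mk [a] B [a] ∈ ξ then Λ.Hcut [h.choose] ξ else ξ

/-- The Renault–Deaconu basic set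
`𝒱(X, Y, m, n) = {(η, m-n, ξ) ∈ Γ : (η, ξ) ∈ X × Y, σ^m(η) = σ^n(ξ)}` (raw version). -/
noncomputable def VrdRaw (Xs Ys : Set (Set (Tr V A))) (m n : ℕ) :
    Set (Set (Tr V A) × ℤ × Set (Tr V A)) :=
  {p | Λ.InGamma p.1 p.2.1 p.2.2 ∧ p.2.1 = (m : ℤ) - (n : ℤ) ∧
       p.1 ∈ Xs ∧ p.2.2 ∈ Ys ∧ (Λ.sigmaMap)^[m] p.1 = (Λ.sigmaMap)^[n] p.2.2}

/-! ## The groupoid of germs `𝒢_tight` -/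

/-- The action `θ_s(φ)(e) = φ(s* e s)` of `S` on characters. -/
noncomputable def theta (s : Tr V A) (φ : Tr V A → Bool) : Tr V A → Bool :=
  fun e => if e ∈ Λ.ESet then φ (Λ.tmul (Λ.tmul (Tr.tstar s) e) s) else false

/-- `Ω = {(s, φ) ∈ S × Ê_tight : φ ∈ D_{s*s}}`. -/
noncomputable def Omega : Set (Tr V A × (Tr V A → Bool)) :=
  {p | p.1 ∈ Λ.SSet ∧ p.2 ∈ Λ.tightSpectrum ∧ p.2 (Λ.tmul (Tr.tstar p.1) p.1) = true}

/-- The germ equivalence relation on `Ω`: `(s,φ) ∼ (t,ψ)` iff `φ = ψ` and there is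
`e ∈ E(S)` with `φ(e) = 1` and `se = te`. -/
noncomputable def germEquiv (p q : Tr V A × (Tr V A → Bool)) : Prop :=
  p.2 = q.2 ∧ ∃ e ∈ Λ.ESet, p.2 e = true ∧ Λ.tmul p.1 e = Λ.tmul q.1 e

/-- The map `Φ` at the level of `Ω`: for `t = (β, X, γ)` and `φ` with filter `ξ^α`
(where `α = γα'`), `Φ[t,φ] = ((G_{(β)α'} ∘ H_{[γ]α'})(ξ^α), |β|-|γ|, ξ^α)`. -/
noncomputable def PhiRaw : Tr V A → (Tr V A → Bool) → Set (Tr V A) × ℤ × Set (Tr V A)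
  | Tr.zero, _ => (∅, 0, ∅)
  | Tr.mk β _ γ, φ =>
      (Λ.Gglue β (Λ.Hcut γ {e | φ e = true}), (β.length : ℤ) - (γ.length : ℤ),
        {e | φ e = true})

/-! ## Miscellaneous notions -/

/-- `ℒ(XE¹) = {ℒ(e) : e ∈ E¹, s(e) ∈ X}`. -/
def labE (X : Set V) : Set A := {a | ∃ e, Λ.lab e = a ∧ Λ.src e ∈ X}

/-- The set `E⁰_sink` of sinks. -/
def sinks : Set V := {v | ∀ e, Λ.src e ≠ v}

/-- The filter in `E(S)` associated with a pair (word, complete family). -/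
def pairFilter (_Λ : LblSp V Ed A) (α : Word A) (F : ℕ → Set (Set V)) : Set (Tr V A) :=
  {t | ∃ (n : ℕ) (B : Set V), (n : ℕ∞) ≤ wlength α ∧ B ∈ F n ∧
    t = Tr.mk (wprefix α n) B (wprefix α n)}

/-- A complete family for the word `α`: `F n` is a filter in `𝒜^{α_{1,n}}` for
`1 ≤ n ≤ |α|` (`F 0` is a filter in `𝒜` or empty, and a filter if `α = ω`), and
`F n = {X ∈ 𝒜^{α_{1,n}} : r(X, α_{n+1}) ∈ F (n+1)}` for all `n < |α|`. -/
noncomputable def IsCompleteFamily (α : Word A) (F : ℕ → Set (Set V)) : Prop :=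
  Λ.IsWordW α ∧
  (∀ n : ℕ, 1 ≤ n → (n : ℕ∞) ≤ wlength α → Λ.IsFilterAset (wprefix α n) (F n)) ∧
  (F 0 = ∅ ∨ Λ.IsFilterAset [] (F 0)) ∧
  (wlength α = 0 → Λ.IsFilterAset [] (F 0)) ∧
  (∀ n : ℕ, ((n + 1 : ℕ) : ℕ∞) ≤ wlength α →
    F n = {X | X ∈ Λ.Aset (wprefix α n) ∧
      Λ.relRange X ((wprefix α (n + 1)).drop n) ∈ F (n + 1)})

/-! ## The tight filter space `T` and the groupoid `Γ` as types -/

/-- The space `T` of tight filters. -/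
structure TightT where
  carrier : Set (Tr V A)
  tight : Λ.IsTightFilter carrier

/-- The topology of `T`, induced from pointwise convergence of characters. -/
noncomputable instance : TopologicalSpace Λ.TightT :=
  TopologicalSpace.induced (fun ξ => Λ.charOf ξ.carrier) inferInstance

/-- The groupoid `Γ ⊆ T × ℤ × T` as a type. -/
structure GammaT where
  fst : Λ.TightT
  mid : ℤ
  lst : Λ.TightT
  mem : Λ.InGamma fst.carrier mid lst.carrier

/-- The raw triple underlying an element of `Γ`. -/
def rawOf (p : Λ.GammaT) : Set (Tr V A) × ℤ × Set (Tr V A) :=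
  (p.fst.carrier, p.mid, p.lst.carrier)

/-- The collection of all sets `Z_{s,e:e₁,…,eₙ}` (for `s ∈ S`, `e, eᵢ ∈ E(S)`),
as subsets of `Γ`. -/
noncomputable def ZBasisT : Set (Set Λ.GammaT) :=
  {Z | ∃ (μ : List A) (X : Set V) (ν : List A) (e : Tr V A) (es : List (Tr V A)),
    Tr.mk μ X ν ∈ Λ.SSet ∧ e ∈ Λ.ESet ∧ (∀ f ∈ es, f ∈ Λ.ESet) ∧
    Z = {p : Λ.GammaT | Λ.rawOf p ∈ Λ.ZrawGen μ ν e es}}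

/-- The topology on `Γ` induced by the isomorphism `Φ` from the germ topology of
`𝒢_tight`, generated by the images of the basic sets `Θ(s, 𝒰)` with `𝒰 ⊆ D_{s*s}`
open in the tight spectrum. -/
noncomputable def PhiTopology : TopologicalSpace Λ.GammaT :=
  TopologicalSpace.generateFrom
    {Z | ∃ (s : Tr V A) (U : Set (Tr V A → Bool)), s ∈ Λ.SSet ∧
      (∃ W, IsOpen W ∧ U = W ∩ Λ.tightSpectrum) ∧
      (∀ φ ∈ U, φ (Λ.tmul (Tr.tstar s) s) = true) ∧
      Z = {p : Λ.GammaT | ∃ φ ∈ U, (s, φ) ∈ Λ.Omega ∧ Λ.PhiRaw s φ = Λ.rawOf p}}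

end LblSp

/-!
A tight filter has a unique associated word. So if `(ξ^{aγ}, η^{bγ})` and `(η^{cδ}, ρ^{dδ})`
witness two composable elements of `Γ`, then `bγ = cδ`, and when `|b| ≤ |c|` we get
`c = be` and `γ = eδ`. Cutting is functorial, `H_{[xy]} = H_{[y]} ∘ H_{[x]}`, hence
`H_{[ae]δ}(ξ) = H_{[e]δ}(H_{[a]γ}(ξ)) = H_{[e]δ}(H_{[b]γ}(η)) = H_{[c]δ}(η)`, which equals
`H_{[d]δ}(ρ)`; this exhibits `(ξ, |ae| - |d|, ρ) ∈ Γ`. The case `|c| ≤ |b|` is the same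
argument applied to the inverses.
-/

theorem drop_ne_nil_of_map_eq_append {α β : Type*} {f : α → β} {l : List α} {x w : List β}
    (h : l.map f = x ++ w) (hw : w ≠ []) : l.drop x.length ≠ [] := by
  have hlen : l.length = x.length + w.length := by simpa using congrArg List.length h
  rw [← List.length_pos_iff, List.length_drop, hlen]
  have := List.length_pos_iff.mpr hw
  omega

section Words

variable {A : Type w}

theorem wPrefix_nil (w : Word A) : WPrefix [] w := by
  cases w with
  | inl l => exact List.nil_prefix
  | inr f => simp [WPrefix]

theorem wPrefix_ofFn (f : ℕ → A) (n : ℕ) :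
    WPrefix (List.ofFn fun i : Fin n => f i) (Sum.inr f : Word A) := by
  simp only [WPrefix, Sum.elim_inr]
  exact List.ext_getElem (by simp) fun i _ _ => by simp

theorem wPrefix_wappend (x : List A) (w : Word A) : WPrefix x (wappend x w) := by
  cases w with
  | inl l => exact List.prefix_append x l
  | inr f =>
    simp only [WPrefix, wappend, Sum.elim_inr]
    exact List.ext_getElem (by simp) fun i _ _ => by simp

theorem ofFn_prefix_ofFn (f : ℕ → A) {m n : ℕ} (h : m ≤ n) :
    (List.ofFn fun i : Fin m => f i) <+: List.ofFn fun i : Fin n => f i := by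
  rw [List.prefix_iff_eq_take]
  exact List.ext_getElem (by simp; omega) fun i _ _ => by simp

theorem WPrefix.prefix_of_length_le {w : Word A} {p q : List A} (hp : WPrefix p w)
    (hq : WPrefix q w) (hpq : p.length ≤ q.length) : p <+: q := by
  cases w with
  | inl l => exact List.prefix_of_prefix_length_le hp hq hpq
  | inr f =>
    simp only [WPrefix, Sum.elim_inr] at hp hq
    rw [hp, hq]
    exact ofFn_prefix_ofFn f hpq

theorem eq_of_wPrefix_iff {w₁ w₂ : Word A}
    (h : ∀ β : List A, β ≠ [] → (WPrefix β w₁ ↔ WPrefix β w₂)) : w₁ = w₂ := by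
  have h' : ∀ β, WPrefix β w₁ ↔ WPrefix β w₂ := fun β => by
    rcases eq_or_ne β [] with rfl | hβ
    · exact iff_of_true (wPrefix_nil w₁) (wPrefix_nil w₂)
    · exact h β hβ
  have not_inl_inr : ∀ (l : List A) (f : ℕ → A),
      ¬ WPrefix (List.ofFn fun i : Fin (l.length + 1) => f i) (Sum.inl l : Word A) :=
    fun l f hp => by simpa using hp.length_le
  cases w₁ with
  | inl l₁ =>
    cases w₂ with
    | inl l₂ =>
      exact congrArg Sum.inl (((h' l₁).1 (List.prefix_refl l₁)).eq_of_length_le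
        ((h' l₂).2 (List.prefix_refl l₂)).length_le)
    | inr f => exact absurd ((h' _).2 (wPrefix_ofFn f _)) (not_inl_inr l₁ f)
  | inr f₁ =>
    cases w₂ with
    | inl l₂ => exact absurd ((h' _).1 (wPrefix_ofFn f₁ _)) (not_inl_inr l₂ f₁)
    | inr f₂ =>
      refine congrArg Sum.inr (funext fun n => ?_)
      simpa [List.getElem?_ofFn, -List.ofFn_succ] using
        congrArg (·[n]?) ((h' _).1 (wPrefix_ofFn f₁ (n + 1)))

theorem wappend_append (x y : List A) (w : Word A) :
    wappend (x ++ y) w = wappend x (wappend y w) := by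
  cases w with
  | inl l => simp [wappend]
  | inr f =>
    simp only [wappend, Sum.elim_inr, Sum.inr.injEq, List.get_eq_getElem, List.length_append]
    funext n
    by_cases h₁ : n < x.length
    · simp [h₁, List.getElem_append_left h₁, show n < x.length + y.length by omega]
    · by_cases h₂ : n < x.length + y.length
      · simp [h₁, h₂, List.getElem_append_right (Nat.le_of_not_lt h₁),
          show n - x.length < y.length by omega]
      · simp [h₁, h₂, show ¬ n - x.length < y.length by omega, Nat.sub_sub]

theorem wappend_injective (x : List A) : Function.Injective (wappend x) := by
  intro w₁ w₂ h
  cases w₁ <;> cases w₂ <;> simp only [wappend, Sum.elim_inl, Sum.elim_inr, Sum.inl.injEq,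
    Sum.inr.injEq, reduceCtorEq] at h
  · exact congrArg Sum.inl (List.append_cancel_left h)
  · refine congrArg Sum.inr (funext fun n => ?_)
    simpa using congrFun h (x.length + n)

theorem exists_eq_append_of_wappend_eq {b c : List A} {γ δ : Word A}
    (h : wappend b γ = wappend c δ) (hbc : b.length ≤ c.length) :
    ∃ e, c = b ++ e ∧ γ = wappend e δ := by
  have hc : WPrefix c (wappend b γ) := h ▸ wPrefix_wappend c δ
  obtain ⟨e, rfl⟩ := (wPrefix_wappend b γ).prefix_of_length_le hc hbc
  exact ⟨e, rfl, wappend_injective b (by rw [← wappend_append]; exact h)⟩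

end Words

namespace LblSp

variable {V : Type u} {Ed : Type v} {A : Type w} (Λ : LblSp V Ed A)

theorem isPathLabel_of_append {x w : List A} (h : Λ.IsPathLabel (x ++ w)) (hw : w ≠ []) :
    Λ.IsPathLabel w := by
  obtain ⟨l, -, hch, hmap⟩ := h
  exact ⟨l.drop x.length, drop_ne_nil_of_map_eq_append hmap hw, hch.drop _,
    by rw [List.map_drop, hmap, List.drop_left]⟩

theorem mem_LStar_of_append {x w : List A} (h : x ++ w ∈ Λ.LStar) : w ∈ Λ.LStar := by
  rcases eq_or_ne w [] with rfl | hw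
  · exact Or.inl rfl
  rcases h with h | h
  · exact absurd (List.append_eq_nil_iff.mp h).2 hw
  · exact Or.inr (Λ.isPathLabel_of_append h hw)

theorem mem_rangeL {α : List A} (hα : α ≠ []) {v : V} :
    v ∈ Λ.rangeL α ↔ ∃ (l : List Ed) (h : l ≠ []),
      l.IsChain (fun e f => Λ.rng e = Λ.src f) ∧ l.map Λ.lab = α ∧
        Λ.rng (l.getLast h) = v := by
  simp only [rangeL, relRange, if_neg hα, Set.mem_ofPred_eq, Set.mem_univ, true_and]
  rfl

theorem rangeL_append_subset {x w : List A} (hw : w ≠ []) :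
    Λ.rangeL (x ++ w) ⊆ Λ.rangeL w := by
  intro v hv
  obtain ⟨l, -, hch, hmap, rfl⟩ := (Λ.mem_rangeL (by simp [hw])).1 hv
  have hd := drop_ne_nil_of_map_eq_append hmap hw
  exact (Λ.mem_rangeL hw).2 ⟨l.drop x.length, hd, hch.drop _,
    by rw [List.map_drop, hmap, List.drop_left], by rw [List.getLast_drop]⟩

theorem mem_ESet_mk {α : List A} {X : Set V} (h : Tr.mk α X α ∈ Λ.ESet) :
    α ∈ Λ.LStar ∧ X ∈ Λ.Aset α := by
  rcases h with h | ⟨β, Y, h, hβ, hY, -⟩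
  · cases h
  · cases h
    exact ⟨hβ, hY⟩

theorem mem_Hcut {α : List A} (hα : α ≠ []) {ξ : Set (Tr V A)} {δ : List A} {B : Set V} :
    Tr.mk δ B δ ∈ Λ.Hcut α ξ ↔
      B ∈ Λ.Aset δ ∧ ∃ D, Tr.mk (α ++ δ) D (α ++ δ) ∈ ξ ∧ D ⊆ B := by
  simp [Hcut, hα]

theorem eq_mk_of_mem_Hcut {α : List A} (hα : α ≠ []) {ξ : Set (Tr V A)} {t : Tr V A}
    (ht : t ∈ Λ.Hcut α ξ) : ∃ δ B, t = Tr.mk δ B δ := by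
  rw [Hcut, if_neg hα] at ht
  obtain ⟨δ, B, rfl, -⟩ := ht
  exact ⟨δ, B, rfl⟩

theorem Hcut_append (hΛ : Λ.IsLS) {ξ : Set (Tr V A)} (hξ : ξ ⊆ Λ.ESet) (x y : List A) :
    Λ.Hcut (x ++ y) ξ = Λ.Hcut y (Λ.Hcut x ξ) := by
  rcases eq_or_ne x [] with rfl | hx
  · simp [Hcut]
  rcases eq_or_ne y [] with rfl | hy
  · simp [Hcut]
  have hxy : x ++ y ≠ [] := by simp [hx]
  ext t
  constructor
  · intro ht
    obtain ⟨δ, B, rfl⟩ := Λ.eq_mk_of_mem_Hcut hxy ht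
    obtain ⟨hB, D, hD, hDB⟩ := (Λ.mem_Hcut hxy).1 ht
    rw [List.append_assoc] at hD
    obtain ⟨hL, hDA⟩ := Λ.mem_ESet_mk (hξ hD)
    have hyδ : y ++ δ ≠ [] := by simp [hy]
    have hr : Λ.rangeL (y ++ δ) ∈ Λ.𝒜 := hΛ.range_mem _ (Λ.mem_LStar_of_append hL) hyδ
    have hDr : D ⊆ Λ.rangeL (y ++ δ) := hDA.2.trans (Λ.rangeL_append_subset hyδ)
    have hBr : B ∩ Λ.rangeL (y ++ δ) ∈ Λ.Aset (y ++ δ) :=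
      ⟨hΛ.inter_mem _ hB.1 _ hr, Set.inter_subset_right⟩
    exact (Λ.mem_Hcut hy).2 ⟨hB, B ∩ Λ.rangeL (y ++ δ),
      (Λ.mem_Hcut hx).2 ⟨hBr, D, hD, Set.subset_inter hDB hDr⟩, Set.inter_subset_left⟩
  · intro ht
    obtain ⟨δ, B, rfl⟩ := Λ.eq_mk_of_mem_Hcut hy ht
    obtain ⟨hB, D, hD, hDB⟩ := (Λ.mem_Hcut hy).1 ht
    obtain ⟨-, D', hD', hD'D⟩ := (Λ.mem_Hcut hx).1 hD
    exact (Λ.mem_Hcut hxy).2 ⟨hB, D', by simpa using hD', hD'D.trans hDB⟩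

theorem mem_LStar_of_hasWord {ξ : Set (Tr V A)} {w : Word A} {x : List A} (hξ : ξ ⊆ Λ.ESet)
    (h : Λ.HasWord ξ w) (hx : WPrefix x w) : x ∈ Λ.LStar := by
  rcases eq_or_ne x [] with rfl | hx₀
  · exact Or.inl rfl
  obtain ⟨B, hB⟩ := (h x hx₀).2 hx
  exact (Λ.mem_ESet_mk (hξ hB)).1

def IsGammaWitness (ξ η : Set (Tr V A)) (a b : List A) (γ : Word A) : Prop :=
  a ∈ Λ.LStar ∧ b ∈ Λ.LStar ∧ Λ.IsWordW γ ∧ ξ ∈ Λ.TWord (wappend a γ) ∧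
    η ∈ Λ.TWord (wappend b γ) ∧ Λ.Hcut a ξ = Λ.Hcut b η

theorem inGamma_iff {ξ η : Set (Tr V A)} {m : ℤ} :
    Λ.InGamma ξ m η ↔
      ∃ a b γ, Λ.IsGammaWitness ξ η a b γ ∧ m = (a.length : ℤ) - (b.length : ℤ) := by
  constructor
  · rintro ⟨a, b, γ, ha, hb, hγ, hξ, hη, hm, hab⟩
    exact ⟨a, b, γ, ⟨ha, hb, hγ, hξ, hη, hab⟩, hm⟩
  · rintro ⟨a, b, γ, ⟨ha, hb, hγ, hξ, hη, hab⟩, hm⟩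
    exact ⟨a, b, γ, ha, hb, hγ, hξ, hη, hm, hab⟩

section

variable {Λ}

theorem IsFilterES.subset_ESet {ξ : Set (Tr V A)} (h : Λ.IsFilterES ξ) : ξ ⊆ Λ.ESet :=
  fun t ht => (h.2.1 t ht).1

theorem HasWord.unique {ξ : Set (Tr V A)} {w₁ w₂ : Word A} (h₁ : Λ.HasWord ξ w₁)
    (h₂ : Λ.HasWord ξ w₂) : w₁ = w₂ :=
  eq_of_wPrefix_iff fun β hβ => (h₁ β hβ).symm.trans (h₂ β hβ)

theorem IsGammaWitness.symm {ξ η : Set (Tr V A)} {a b : List A} {γ : Word A}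
    (h : Λ.IsGammaWitness ξ η a b γ) : Λ.IsGammaWitness η ξ b a γ :=
  let ⟨ha, hb, hγ, hξ, hη, hab⟩ := h
  ⟨hb, ha, hγ, hη, hξ, hab.symm⟩

theorem IsGammaWitness.trans_of_length_le (hΛ : Λ.IsLS) {ξ η ρ : Set (Tr V A)}
    {a b c d : List A} {γ δ : Word A} (h₁ : Λ.IsGammaWitness ξ η a b γ)
    (h₂ : Λ.IsGammaWitness η ρ c d δ) (hbc : b.length ≤ c.length) :
    ∃ e, c = b ++ e ∧ Λ.IsGammaWitness ξ ρ (a ++ e) d δ := by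
  obtain ⟨-, -, -, hξ, hη, hab⟩ := h₁
  obtain ⟨-, hd, hδ, hη', hρ, hcd⟩ := h₂
  obtain ⟨e, rfl, rfl⟩ := exists_eq_append_of_wappend_eq (hη.2.unique hη'.2) hbc
  have hξ' : ξ ∈ Λ.TWord (wappend (a ++ e) δ) := by rwa [wappend_append]
  refine ⟨e, rfl, Λ.mem_LStar_of_hasWord hξ.1.1.subset_ESet hξ'.2 (wPrefix_wappend _ _),
    hd, hδ, hξ', hρ, ?_⟩
  calc Λ.Hcut (a ++ e) ξ = Λ.Hcut e (Λ.Hcut a ξ) := Λ.Hcut_append hΛ hξ.1.1.subset_ESet a e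
    _ = Λ.Hcut e (Λ.Hcut b η) := by rw [hab]
    _ = Λ.Hcut (b ++ e) η := (Λ.Hcut_append hΛ hη.1.1.subset_ESet b e).symm
    _ = Λ.Hcut d ρ := hcd

theorem IsGammaWitness.trans (hΛ : Λ.IsLS) {ξ η ρ : Set (Tr V A)} {a b c d : List A}
    {γ δ : Word A} (h₁ : Λ.IsGammaWitness ξ η a b γ)
    (h₂ : Λ.IsGammaWitness η ρ c d δ) :
    ∃ a' d' γ', Λ.IsGammaWitness ξ ρ a' d' γ' ∧
      (a'.length : ℤ) - d'.length = (a.length - b.length) + (c.length - d.length) := by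
  rcases le_total b.length c.length with hbc | hcb
  · obtain ⟨e, rfl, h⟩ := h₁.trans_of_length_le hΛ h₂ hbc
    exact ⟨_, _, _, h, by simp only [List.length_append, Nat.cast_add]; ring⟩
  · obtain ⟨e, rfl, h⟩ := h₂.symm.trans_of_length_le hΛ h₁.symm hcb
    exact ⟨_, _, _, h.symm, by simp only [List.length_append, Nat.cast_add]; ring⟩

theorem InGamma.symm {ξ η : Set (Tr V A)} {m : ℤ} (h : Λ.InGamma ξ m η) :
    Λ.InGamma η (-m) ξ := by
  obtain ⟨a, b, γ, hw, rfl⟩ := Λ.inGamma_iff.1 h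
  exact Λ.inGamma_iff.2 ⟨b, a, γ, hw.symm, by ring⟩

theorem InGamma.trans (hΛ : Λ.IsLS) {ξ η ρ : Set (Tr V A)} {m n : ℤ}
    (h₁ : Λ.InGamma ξ m η) (h₂ : Λ.InGamma η n ρ) : Λ.InGamma ξ (m + n) ρ := by
  obtain ⟨a, b, γ, hw₁, rfl⟩ := Λ.inGamma_iff.1 h₁
  obtain ⟨c, d, δ, hw₂, rfl⟩ := Λ.inGamma_iff.1 h₂
  obtain ⟨a', d', γ', h, hlen⟩ := hw₁.trans hΛ hw₂
  exact Λ.inGamma_iff.2 ⟨a', d', γ', h, hlen.symm⟩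

end

/-- For a weakly left-resolving normal labelled space,
`Γ = {(ξ^{αγ}, |α|-|β|, η^{βγ}) : H_{[α]γ}(ξ^{αγ}) = H_{[β]γ}(η^{βγ})}` is a groupoid
under `(ξ,m,η)·(η,n,ρ) = (ξ,m+n,ρ)` and `(ξ,m,η)⁻¹ = (η,-m,ξ)`; in particular it is
closed under the product and under the inverse. -/
theorem statement_1 (hΛ : Λ.IsNormal) :
    (∀ (ξ : Set (Tr V A)) (m : ℤ) (η : Set (Tr V A)) (n : ℤ) (ρ : Set (Tr V A)),
      Λ.InGamma ξ m η → Λ.InGamma η n ρ → Λ.InGamma ξ (m + n) ρ) ∧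
    (∀ (ξ : Set (Tr V A)) (m : ℤ) (η : Set (Tr V A)),
      Λ.InGamma ξ m η → Λ.InGamma η (-m) ξ) :=
  ⟨fun _ _ _ _ _ => InGamma.trans hΛ.toIsWLR.toIsLS, fun _ _ _ => InGamma.symm⟩

end LblSp
end

section
/- Let (E,ℒ,𝒜) be a weakly left-resolving labelled space. Then the inverse semigroup S of the labelled space is E*-unitary: for every s ∈ S, if there exists an idempotent e ∈ E(S)∖{0} with e = se, then s ∈ E(S). -/
open Classical

universe u v w

namespace LblSp

variable {V : Type u} {Ed : Type v} {A : Type w} (Λ : LblSp V Ed A)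

/-- In the first case of the product, `α ++ γ'` and `β ++ γ'` both equal `γ`; in the second,
`γ ++ β' = γ` forces `β' = []`, so `β = γ = α`. -/
theorem eq_of_tmul_mk_eq_mk {α β γ : List A} {X Y : Set V}
    (h : Λ.tmul (.mk α X β) (.mk γ Y γ) = .mk γ Y γ) : α = β := by
  rw [tmul] at h
  split_ifs at h with hβγ hγβ
  · obtain ⟨hα, -, -⟩ := Tr.mk.inj h
    exact List.append_cancel_right (hα.trans (List.prefix_iff_eq_append.mp hβγ.1).symm)
  · obtain ⟨hα, -, hγ⟩ := Tr.mk.inj h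
    exact hα.trans (hγ.symm.trans (List.prefix_iff_eq_append.mp hγβ.1))

theorem statement_3 :
    ∀ s ∈ Λ.SSet, ∀ e ∈ Λ.ESet, e ≠ Tr.zero → e = Λ.tmul s e → s ∈ Λ.ESet := by
  rintro s (rfl | ⟨α, X, β, rfl, -, hβ, -, hXβ, hX⟩) e (rfl | ⟨γ, Y, rfl, -⟩) he hse
  · exact absurd rfl he
  · exact absurd hse he
  · exact absurd rfl he
  · obtain rfl := Λ.eq_of_tmul_mk_eq_mk hse.symm
    exact Or.inr ⟨α, X, rfl, hβ, hXβ, hX⟩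

end LblSp
end

section
/- Let (E,ℒ,𝒜) be a weakly left-resolving, normal labelled space. Then: (i) T^{(1)} = {ξ^α ∈ T : |α| ≥ 1} is an open subset of T, and in fact T^{(1)} = ⋃_{a∈A} V_{(a,r(a),a)}; (ii) the map σ : T^{(1)} → T defined by σ(ξ^{aγ}) = H_{[a]γ}(ξ^{aγ}) is a local homeomorphism; more precisely, for each letter a ∈ A, σ restricted to V_{(a,r(a),a)} is a homeomorphism from V_{(a,r(a),a)} onto V_{(ω,r(a),ω)}. -/
open Classical

universe u v w

namespace LblSp

variable {V : Type u} {Ed : Type v} {A : Type w} (Λ : LblSp V Ed A)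

/-!
Cutting off a first letter `a` is taking the preimage under the semilattice homomorphism
`(δ, B, δ) ↦ (aδ, B ∩ r(aδ), aδ)` of `E(S)`. Gluing `a` back is the preimage under
`(aδ, D, aδ) ↦ (δ, D, δ)`, `(ω, B, ω) ↦ (ω, r(B, a), ω)`, which is multiplicative because the
labelled space is weakly left-resolving. The two composites are multiplication by `(a, r(a), a)`
and by `(ω, r(a), ω)`, so the two preimage maps are mutually inverse order isomorphisms between
the filters containing `(a, r(a), a)` and those containing `(ω, r(a), ω)`. They therefore preserve
ultrafilters; on characters they are precomposition with a fixed map, hence continuous, so they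
also preserve the closure of the ultrafilter characters, i.e. tightness.

For (i): a filter has a word of length `≥ 1` iff it contains some `(b, B, b)`, iff it contains
`(b, r(b), b)`, and the nonempty words occurring in a filter form a prefix chain, closed under
nonempty prefixes, which spells out its word.
-/

section RelativeRanges

variable {Λ}

theorem relRange_nil (X : Set V) : Λ.relRange X [] = X := if_pos rfl

theorem rangeL_nil : Λ.rangeL [] = Set.univ := relRange_nil _

theorem mem_relRange {X : Set V} {u : List A} (hu : u ≠ []) {v : V} :
    v ∈ Λ.relRange X u ↔ ∃ (l : List Ed) (h : l ≠ []),
      List.IsChain (fun e f => Λ.rng e = Λ.src f) l ∧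
      l.map Λ.lab = u ∧ Λ.src (l.head h) ∈ X ∧ Λ.rng (l.getLast h) = v := by
  rw [relRange, if_neg hu]
  rfl

theorem relRange_mono {X Y : Set V} (h : X ⊆ Y) (u : List A) :
    Λ.relRange X u ⊆ Λ.relRange Y u := by
  rcases eq_or_ne u [] with rfl | hu
  · simpa only [relRange_nil] using h
  · intro v hv
    obtain ⟨l, hl, hch, hlab, hsrc, hrng⟩ := (mem_relRange hu).1 hv
    exact (mem_relRange hu).2 ⟨l, hl, hch, hlab, h hsrc, hrng⟩

theorem relRange_subset_rangeL (X : Set V) (u : List A) : Λ.relRange X u ⊆ Λ.rangeL u :=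
  relRange_mono (Set.subset_univ X) u

theorem relRange_append (X : Set V) (u v : List A) :
    Λ.relRange X (u ++ v) = Λ.relRange (Λ.relRange X u) v := by
  rcases eq_or_ne u [] with rfl | hu
  · rw [List.nil_append, relRange_nil]
  rcases eq_or_ne v [] with rfl | hv
  · rw [List.append_nil, relRange_nil]
  ext w
  rw [mem_relRange (List.append_ne_nil_of_left_ne_nil hu v), mem_relRange hv]
  constructor
  · rintro ⟨l, hl, hch, hlab, hsrc, rfl⟩
    obtain ⟨l₁, l₂, rfl, rfl, rfl⟩ := List.map_eq_append_iff.1 hlab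
    have h₁ : l₁ ≠ [] := by rintro rfl; exact hu rfl
    have h₂ : l₂ ≠ [] := by rintro rfl; exact hv rfl
    refine ⟨l₂, h₂, hch.right_of_append, rfl, (mem_relRange hu).2 ⟨l₁, h₁,
      hch.left_of_append, rfl, ?_, hch.rel_getLast_head_of_append h₁ h₂⟩,
      congrArg Λ.rng (List.getLast_append_of_ne_nil _ h₂).symm⟩
    rwa [List.head_append_of_ne_nil h₁] at hsrc
  · rintro ⟨l₂, h₂, hch₂, rfl, hsrc, rfl⟩
    obtain ⟨l₁, h₁, hch₁, rfl, hsrc₁, hlink⟩ := (mem_relRange hu).1 hsrc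
    refine ⟨l₁ ++ l₂, List.append_ne_nil_of_left_ne_nil h₁ _, hch₁.append hch₂ ?_,
      List.map_append, by rwa [List.head_append_of_ne_nil h₁],
      congrArg Λ.rng (List.getLast_append_of_ne_nil _ h₂)⟩
    simp [List.getLast?_eq_some_getLast h₁, List.head?_eq_some_head h₂, hlink]

theorem rangeL_append (u v : List A) : Λ.rangeL (u ++ v) = Λ.relRange (Λ.rangeL u) v :=
  relRange_append _ u v

theorem nonempty_of_relRange_nonempty {X : Set V} {u : List A} (h : (Λ.relRange X u).Nonempty) :
    X.Nonempty := by
  rcases eq_or_ne u [] with rfl | hu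
  · rwa [relRange_nil] at h
  · obtain ⟨v, hv⟩ := h
    obtain ⟨l, hl, -, -, hsrc, -⟩ := (mem_relRange hu).1 hv
    exact ⟨_, hsrc⟩

theorem relRange_empty (u : List A) : Λ.relRange ∅ u = ∅ :=
  Set.not_nonempty_iff_eq_empty.1 fun h => (nonempty_of_relRange_nonempty h).ne_empty rfl

theorem mem_LStar_of_relRange_nonempty {X : Set V} {u : List A}
    (h : (Λ.relRange X u).Nonempty) : u ∈ Λ.LStar := by
  rcases eq_or_ne u [] with rfl | hu
  · exact Or.inl rfl
  · obtain ⟨v, hv⟩ := h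
    obtain ⟨l, hl, hch, hlab, -⟩ := (mem_relRange hu).1 hv
    exact Or.inr ⟨l, hl, hch, hlab⟩

theorem relRange_mem (hΛ : Λ.IsLS) {X : Set V} (hX : X ∈ Λ.𝒜) {u : List A}
    (h : (Λ.relRange X u).Nonempty) : Λ.relRange X u ∈ Λ.𝒜 :=
  hΛ.relRange_mem X hX u (mem_LStar_of_relRange_nonempty h)

theorem rangeL_mem (hΛ : Λ.IsLS) {u : List A} (hu : u ≠ []) (h : (Λ.rangeL u).Nonempty) :
    Λ.rangeL u ∈ Λ.𝒜 :=
  hΛ.range_mem u (mem_LStar_of_relRange_nonempty h) hu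

theorem rangeL_singleton_nonempty (a : A) : (Λ.rangeL [a]).Nonempty := by
  obtain ⟨e, rfl⟩ := Λ.lab_surj a
  exact ⟨_, (mem_relRange (List.cons_ne_nil _ _)).2
    ⟨[e], List.cons_ne_nil _ _, List.isChain_singleton e, rfl, Set.mem_univ _, rfl⟩⟩

theorem relRange_inter (hΛ : Λ.IsWLR) {X Y : Set V} (hX : X ∈ Λ.𝒜) (hY : Y ∈ Λ.𝒜)
    (u : List A) : Λ.relRange (X ∩ Y) u = Λ.relRange X u ∩ Λ.relRange Y u := by
  rcases eq_or_ne u [] with rfl | hu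
  · simp only [relRange_nil]
  by_cases hL : u ∈ Λ.LStar
  · exact hΛ.wlr X hX Y hY u hL hu
  · have hempty : ∀ Z : Set V, Λ.relRange Z u = ∅ := fun Z =>
      Set.not_nonempty_iff_eq_empty.1 fun h => hL (mem_LStar_of_relRange_nonempty h)
    simp only [hempty, Set.inter_self]

theorem relRange_inter_rangeL (hΛ : Λ.IsWLR) {X : Set V} (hX : X ∈ Λ.𝒜) (u v : List A) :
    Λ.relRange (X ∩ Λ.rangeL u) v = Λ.relRange X v ∩ Λ.rangeL (u ++ v) := by
  rcases eq_or_ne u [] with rfl | hu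
  · rw [rangeL_nil, Set.inter_univ, List.nil_append,
      Set.inter_eq_left.2 (relRange_subset_rangeL X v)]
  rcases (Λ.rangeL u).eq_empty_or_nonempty with h | h
  · rw [rangeL_append, h, Set.inter_empty, relRange_empty, Set.inter_empty]
  · rw [relRange_inter hΛ hX (rangeL_mem hΛ.toIsLS hu h), rangeL_append]

end RelativeRanges

/-- `(δ, X, δ)`, collapsed to `0` when `X = ∅` as in the product of `S`. -/
noncomputable def _root_.Tr.idem (δ : List A) (X : Set V) : Tr V A :=
  if X.Nonempty then .mk δ X δ else .zero

section Idempotents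

variable {Λ}

theorem _root_.Tr.idem_of_nonempty {δ : List A} {X : Set V} (h : X.Nonempty) :
    Tr.idem δ X = .mk δ X δ :=
  if_pos h

theorem _root_.Tr.idem_of_not_nonempty {δ : List A} {X : Set V} (h : ¬X.Nonempty) :
    Tr.idem δ X = .zero :=
  if_neg h

theorem mk_mem_ESet_iff {β γ : List A} {B : Set V} :
    Tr.mk β B γ ∈ Λ.ESet ↔ γ = β ∧ β ∈ Λ.LStar ∧ B ∈ Λ.𝒜 ∧ B ⊆ Λ.rangeL β ∧ B.Nonempty := by
  constructor
  · rintro (h | ⟨α, X, h, hα, ⟨hX, hXr⟩, hne⟩)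
    · cases h
    · cases h
      exact ⟨rfl, hα, hX, hXr, hne⟩
  · rintro ⟨rfl, hβ, hB, hBr, hne⟩
    exact Or.inr ⟨_, B, rfl, hβ, ⟨hB, hBr⟩, hne⟩

theorem idem_mem_ESet {δ : List A} {X : Set V} (hX : X.Nonempty → X ∈ Λ.𝒜)
    (hXr : X ⊆ Λ.rangeL δ) : Tr.idem δ X ∈ Λ.ESet := by
  by_cases hne : X.Nonempty
  · rw [Tr.idem_of_nonempty hne]
    exact mk_mem_ESet_iff.2 ⟨rfl, mem_LStar_of_relRange_nonempty (hne.mono hXr), hX hne,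
      hXr, hne⟩
  · rw [Tr.idem_of_not_nonempty hne]
    exact Or.inl rfl

theorem tmul_zero_left (t : Tr V A) : Λ.tmul .zero t = .zero := rfl

theorem tmul_zero_right (t : Tr V A) : Λ.tmul t .zero = .zero := by
  cases t <;> rfl

theorem tmul_mk_of_prefix {β γ : List A} (h : β <+: γ) (B C : Set V) :
    Λ.tmul (.mk β B β) (.mk γ C γ) = Tr.idem γ (Λ.relRange B (γ.drop β.length) ∩ C) := by
  have hγ : β ++ γ.drop β.length = γ := List.prefix_iff_eq_append.1 h
  by_cases hne : (Λ.relRange B (γ.drop β.length) ∩ C).Nonempty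
  · rw [Tr.idem_of_nonempty hne, tmul, if_pos ⟨h, hne⟩, hγ]
  · rw [Tr.idem_of_not_nonempty hne, tmul, if_neg fun h' => hne h'.2, if_neg]
    rintro ⟨h', hne'⟩
    obtain rfl := h.eq_of_length (le_antisymm h.length_le h'.length_le)
    simp only [List.drop_length, relRange_nil] at hne hne'
    exact hne hne'

theorem tmul_mk_of_prefix' {β γ : List A} (h : γ <+: β) (B C : Set V) :
    Λ.tmul (.mk β B β) (.mk γ C γ) = Tr.idem β (B ∩ Λ.relRange C (β.drop γ.length)) := by
  have hβ : γ ++ β.drop γ.length = β := List.prefix_iff_eq_append.1 h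
  by_cases h' : β <+: γ
  · obtain rfl := h.eq_of_length (le_antisymm h.length_le h'.length_le)
    rw [tmul_mk_of_prefix h', List.drop_length, relRange_nil, relRange_nil, Set.inter_comm]
  by_cases hne : (B ∩ Λ.relRange C (β.drop γ.length)).Nonempty
  · rw [Tr.idem_of_nonempty hne, tmul, if_neg fun h'' => h' h''.1, if_pos ⟨h, hne⟩, hβ]
  · rw [Tr.idem_of_not_nonempty hne, tmul, if_neg fun h'' => h' h''.1,
      if_neg fun h'' => hne h''.2]

theorem tmul_mk_of_not_prefix {β γ : List A} (h : ¬β <+: γ) (h' : ¬γ <+: β) (B C : Set V) :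
    Λ.tmul (.mk β B β) (.mk γ C γ) = .zero := by
  rw [tmul, if_neg fun h'' => h h''.1, if_neg fun h'' => h' h''.1]

theorem tmul_idem_of_prefix {β γ : List A} (h : β <+: γ) (X Y : Set V) :
    Λ.tmul (Tr.idem β X) (Tr.idem γ Y) =
      Tr.idem γ (Λ.relRange X (γ.drop β.length) ∩ Y) := by
  by_cases hX : X.Nonempty
  · by_cases hY : Y.Nonempty
    · rw [Tr.idem_of_nonempty hX, Tr.idem_of_nonempty hY, tmul_mk_of_prefix h]
    · rw [Tr.idem_of_not_nonempty hY, tmul_zero_right, Tr.idem_of_not_nonempty]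
      exact fun hne => hY (hne.mono Set.inter_subset_right)
  · rw [Tr.idem_of_not_nonempty hX, Set.not_nonempty_iff_eq_empty.1 hX, relRange_empty,
      Set.empty_inter, Tr.idem_of_not_nonempty Set.not_nonempty_empty, tmul_zero_left]

theorem tmul_idem_of_not_prefix {β γ : List A} (h : ¬β <+: γ) (h' : ¬γ <+: β) (X Y : Set V) :
    Λ.tmul (Tr.idem β X) (Tr.idem γ Y) = .zero := by
  by_cases hX : X.Nonempty
  · by_cases hY : Y.Nonempty
    · rw [Tr.idem_of_nonempty hX, Tr.idem_of_nonempty hY, tmul_mk_of_not_prefix h h']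
    · rw [Tr.idem_of_not_nonempty hY, tmul_zero_right]
  · rw [Tr.idem_of_not_nonempty hX, tmul_zero_left]

theorem tmul_comm_of_mem_ESet {e f : Tr V A} (he : e ∈ Λ.ESet) (hf : f ∈ Λ.ESet) :
    Λ.tmul e f = Λ.tmul f e := by
  rcases he with rfl | ⟨β, B, rfl, -⟩
  · rw [tmul_zero_left, tmul_zero_right]
  rcases hf with rfl | ⟨γ, C, rfl, -⟩
  · rw [tmul_zero_left, tmul_zero_right]
  by_cases h : β <+: γ
  · rw [tmul_mk_of_prefix h, tmul_mk_of_prefix' h, Set.inter_comm]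
  by_cases h' : γ <+: β
  · rw [tmul_mk_of_prefix h', tmul_mk_of_prefix' h', Set.inter_comm]
  · rw [tmul_mk_of_not_prefix h h', tmul_mk_of_not_prefix h' h]

theorem tmul_mem_ESet (hΛ : Λ.IsLS) {e f : Tr V A} (he : e ∈ Λ.ESet) (hf : f ∈ Λ.ESet) :
    Λ.tmul e f ∈ Λ.ESet := by
  suffices key : ∀ β γ : List A, ∀ B C : Set V, β <+: γ → Tr.mk β B β ∈ Λ.ESet →
      Tr.mk γ C γ ∈ Λ.ESet → Λ.tmul (.mk β B β) (.mk γ C γ) ∈ Λ.ESet by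
    rcases he with rfl | ⟨β, B, rfl, he⟩
    · exact Or.inl rfl
    rcases hf with rfl | ⟨γ, C, rfl, hf⟩
    · exact Or.inl rfl
    by_cases h : β <+: γ
    · exact key β γ B C h (Or.inr ⟨β, B, rfl, he⟩) (Or.inr ⟨γ, C, rfl, hf⟩)
    by_cases h' : γ <+: β
    · rw [tmul_comm_of_mem_ESet (Or.inr ⟨β, B, rfl, he⟩) (Or.inr ⟨γ, C, rfl, hf⟩)]
      exact key γ β C B h' (Or.inr ⟨γ, C, rfl, hf⟩) (Or.inr ⟨β, B, rfl, he⟩)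
    · rw [tmul_mk_of_not_prefix h h']
      exact Or.inl rfl
  intro β γ B C h hB hC
  obtain ⟨-, -, hB, -, -⟩ := mk_mem_ESet_iff.1 hB
  obtain ⟨-, -, hC, hCr, -⟩ := mk_mem_ESet_iff.1 hC
  rw [tmul_mk_of_prefix h]
  refine idem_mem_ESet (fun hne => hΛ.inter_mem _ ?_ _ hC) (Set.inter_subset_right.trans hCr)
  exact relRange_mem hΛ hB (hne.mono Set.inter_subset_left)

end Idempotents

section Filters

variable {Λ} {ξ : Set (Tr V A)}

theorem IsFilterES.mem_ESet (hξ : Λ.IsFilterES ξ) {t : Tr V A} (ht : t ∈ ξ) : t ∈ Λ.ESet :=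
  (hξ.2.1 t ht).1

theorem IsFilterES.zero_not_mem (hξ : Λ.IsFilterES ξ) : Tr.zero ∉ ξ :=
  fun h => (hξ.2.1 _ h).2 rfl

theorem IsFilterES.of_mk_mem (hξ : Λ.IsFilterES ξ) {β γ : List A} {B : Set V}
    (h : Tr.mk β B γ ∈ ξ) :
    γ = β ∧ β ∈ Λ.LStar ∧ B ∈ Λ.𝒜 ∧ B ⊆ Λ.rangeL β ∧ B.Nonempty :=
  mk_mem_ESet_iff.1 (hξ.mem_ESet h)

theorem IsFilterES.mk_mem_of_idem_mem (hξ : Λ.IsFilterES ξ) {δ : List A} {X : Set V}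
    (h : Tr.idem δ X ∈ ξ) : Tr.mk δ X δ ∈ ξ := by
  by_cases hX : X.Nonempty
  · rwa [Tr.idem_of_nonempty hX] at h
  · rw [Tr.idem_of_not_nonempty hX] at h
    exact absurd h hξ.zero_not_mem

theorem IsFilterES.mem_of_le (hξ : Λ.IsFilterES ξ) {β γ : List A} {B C : Set V}
    (hB : Tr.mk β B β ∈ ξ) (hC : C ∈ Λ.𝒜) (hCr : C ⊆ Λ.rangeL γ) (h : γ <+: β)
    (hBC : B ⊆ Λ.relRange C (β.drop γ.length)) : Tr.mk γ C γ ∈ ξ := by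
  have hBne := (hξ.of_mk_mem hB).2.2.2.2
  have hCne : C.Nonempty := nonempty_of_relRange_nonempty (hBne.mono hBC)
  refine hξ.2.2.2 _ hB _ (mk_mem_ESet_iff.2 ⟨rfl, mem_LStar_of_relRange_nonempty
    (hCne.mono hCr), hC, hCr, hCne⟩) ?_
  rw [tmul_mk_of_prefix' h, Set.inter_eq_left.2 hBC, Tr.idem_of_nonempty hBne]

theorem IsFilterES.mem_of_superset (hξ : Λ.IsFilterES ξ) {β : List A} {B C : Set V}
    (hB : Tr.mk β B β ∈ ξ) (hC : C ∈ Λ.𝒜) (hBC : B ⊆ C) (hCr : C ⊆ Λ.rangeL β) :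
    Tr.mk β C β ∈ ξ :=
  hξ.mem_of_le hB hC hCr (List.prefix_refl β) (by rwa [List.drop_length, relRange_nil])

theorem IsFilterES.mem_of_tmul_mem (hξ : Λ.IsFilterES ξ) {e f : Tr V A} (he : e ∈ Λ.ESet)
    (hf : f ∈ Λ.ESet) (h : Λ.tmul e f ∈ ξ) : e ∈ ξ := by
  rcases he with rfl | ⟨β, B, rfl, -, ⟨hB, hBr⟩, -⟩
  · exact absurd h hξ.zero_not_mem
  rcases hf with rfl | ⟨γ, C, rfl, -⟩
  · exact absurd h hξ.zero_not_mem
  by_cases hβγ : β <+: γ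
  · rw [tmul_mk_of_prefix hβγ] at h
    exact hξ.mem_of_le (hξ.mk_mem_of_idem_mem h) hB hBr hβγ Set.inter_subset_left
  by_cases hγβ : γ <+: β
  · rw [tmul_mk_of_prefix' hγβ] at h
    exact hξ.mem_of_superset (hξ.mk_mem_of_idem_mem h) hB Set.inter_subset_left hBr
  · rw [tmul_mk_of_not_prefix hβγ hγβ] at h
    exact absurd h hξ.zero_not_mem

theorem IsFilterES.tmul_mem_iff (hξ : Λ.IsFilterES ξ) {e f : Tr V A} (he : e ∈ Λ.ESet)
    (hf : f ∈ Λ.ESet) : Λ.tmul e f ∈ ξ ↔ e ∈ ξ ∧ f ∈ ξ := by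
  refine ⟨fun h => ⟨hξ.mem_of_tmul_mem he hf h, ?_⟩, fun h => hξ.2.2.1 e h.1 f h.2⟩
  rw [tmul_comm_of_mem_ESet he hf] at h
  exact hξ.mem_of_tmul_mem hf he h

theorem IsFilterES.prefix_or_prefix (hξ : Λ.IsFilterES ξ) {β γ : List A} {B C : Set V}
    (hB : Tr.mk β B β ∈ ξ) (hC : Tr.mk γ C γ ∈ ξ) : β <+: γ ∨ γ <+: β := by
  by_contra! h
  have hmul := hξ.2.2.1 _ hB _ hC
  rw [tmul_mk_of_not_prefix h.1 h.2] at hmul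
  exact hξ.zero_not_mem hmul

theorem charOf_eq_true {t : Tr V A} : Λ.charOf ξ t = true ↔ t ∈ ξ := by
  by_cases h : t ∈ ξ <;> simp [charOf, h]

theorem IsFilterES.isChar_charOf (hξ : Λ.IsFilterES ξ) : Λ.IsChar (Λ.charOf ξ) := by
  obtain ⟨t, ht⟩ := hξ.1
  refine ⟨⟨t, charOf_eq_true.2 ht⟩, fun e he => ?_, ?_, fun e he f hf => ?_⟩
  · simp [charOf, mt hξ.mem_ESet he]
  · simp [charOf, hξ.zero_not_mem]
  · by_cases he' : e ∈ ξ <;> by_cases hf' : f ∈ ξ <;>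
      simp [charOf, hξ.tmul_mem_iff he hf, he', hf']

end Filters

structure IsESHom (m : Tr V A → Tr V A) : Prop where
  map_zero : m .zero = .zero
  mapsTo : ∀ e ∈ Λ.ESet, m e ∈ Λ.ESet
  map_tmul : ∀ e ∈ Λ.ESet, ∀ f ∈ Λ.ESet, m (Λ.tmul e f) = Λ.tmul (m e) (m f)

def comap (m : Tr V A → Tr V A) (ξ : Set (Tr V A)) : Set (Tr V A) :=
  {e | e ∈ Λ.ESet ∧ m e ∈ ξ}

noncomputable def charComap (m : Tr V A → Tr V A) (φ : Tr V A → Bool) : Tr V A → Bool :=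
  fun t => if t ∈ Λ.ESet then φ (m t) else false

/-- `m₁` and `m₂` restrict to mutually inverse isomorphisms between the down-sets of `f`
and of `e` in `E(S)`. -/
structure IsHomPair (m₁ m₂ : Tr V A → Tr V A) (e f : Tr V A) : Prop where
  hom₁ : Λ.IsESHom m₁
  hom₂ : Λ.IsESHom m₂
  mem_e : e ∈ Λ.ESet
  mem_f : f ∈ Λ.ESet
  map₁ : m₁ f = e
  map₂ : m₂ e = f
  comp₁₂ : ∀ x ∈ Λ.ESet, m₁ (m₂ x) = Λ.tmul x e
  comp₂₁ : ∀ x ∈ Λ.ESet, m₂ (m₁ x) = Λ.tmul x f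

section Homomorphisms

variable {Λ} {m m₁ m₂ : Tr V A → Tr V A} {e f : Tr V A} {ξ : Set (Tr V A)}

theorem IsESHom.of_prefix (h₀ : m .zero = .zero) (hE : ∀ e ∈ Λ.ESet, m e ∈ Λ.ESet)
    (hprefix : ∀ (β γ : List A) (B C : Set V), β <+: γ → Tr.mk β B β ∈ Λ.ESet →
      Tr.mk γ C γ ∈ Λ.ESet →
      m (Λ.tmul (.mk β B β) (.mk γ C γ)) = Λ.tmul (m (.mk β B β)) (m (.mk γ C γ)))
    (hincomp : ∀ (β γ : List A) (B C : Set V), ¬β <+: γ → ¬γ <+: β → Tr.mk β B β ∈ Λ.ESet →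
      Tr.mk γ C γ ∈ Λ.ESet → Λ.tmul (m (.mk β B β)) (m (.mk γ C γ)) = .zero) :
    Λ.IsESHom m := by
  refine ⟨h₀, hE, fun e he f hf => ?_⟩
  rcases he with rfl | ⟨β, B, rfl, he'⟩
  · rw [tmul_zero_left, h₀, tmul_zero_left]
  rcases hf with rfl | ⟨γ, C, rfl, hf'⟩
  · rw [tmul_zero_right, h₀, tmul_zero_right]
  have he : Tr.mk β B β ∈ Λ.ESet := Or.inr ⟨β, B, rfl, he'⟩
  have hf : Tr.mk γ C γ ∈ Λ.ESet := Or.inr ⟨γ, C, rfl, hf'⟩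
  by_cases h : β <+: γ
  · exact hprefix β γ B C h he hf
  by_cases h' : γ <+: β
  · rw [tmul_comm_of_mem_ESet he hf, hprefix γ β C B h' hf he,
      tmul_comm_of_mem_ESet (hE _ hf) (hE _ he)]
  · rw [tmul_mk_of_not_prefix h h', h₀, hincomp β γ B C h h' he hf]

theorem IsESHom.isFilterES_comap (hΛ : Λ.IsLS) (hm : Λ.IsESHom m) (hξ : Λ.IsFilterES ξ)
    (he : e ∈ Λ.ESet) (hme : m e ∈ ξ) : Λ.IsFilterES (Λ.comap m ξ) := by
  refine ⟨⟨e, he, hme⟩, fun t ht => ⟨ht.1, ?_⟩, fun p hp q hq => ⟨tmul_mem_ESet hΛ hp.1 hq.1, ?_⟩,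
    fun p hp q hq hpq => ⟨hq, ?_⟩⟩
  · rintro rfl
    exact hξ.zero_not_mem (hm.map_zero ▸ ht.2)
  · rw [hm.map_tmul _ hp.1 _ hq.1]
    exact hξ.2.2.1 _ hp.2 _ hq.2
  · refine ((hξ.tmul_mem_iff (hm.mapsTo _ hp.1) (hm.mapsTo _ hq)).1 ?_).2
    rw [← hm.map_tmul _ hp.1 _ hq, hpq]
    exact hp.2

theorem comap_mono : Monotone (Λ.comap m) :=
  fun _ _ h _ ht => ⟨ht.1, h ht.2⟩

theorem charOf_comap : Λ.charOf (Λ.comap m ξ) = Λ.charComap m (Λ.charOf ξ) := by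
  funext t
  by_cases ht : t ∈ Λ.ESet <;> simp [charOf, charComap, comap, ht]

theorem continuous_charComap : Continuous (Λ.charComap m) := by
  refine continuous_pi fun t => ?_
  by_cases ht : t ∈ Λ.ESet
  · simpa only [charComap, ht, if_true] using continuous_apply (m t)
  · simpa only [charComap, ht, if_false] using continuous_const

theorem isOpen_setOf_apply_eq_true (t : Tr V A) : IsOpen {φ : Tr V A → Bool | φ t = true} :=
  (continuous_apply (A := fun _ : Tr V A => Bool) t).isOpen_preimage {true} (isOpen_discrete _)

theorem IsHomPair.symm (h : Λ.IsHomPair m₁ m₂ e f) : Λ.IsHomPair m₂ m₁ f e :=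
  ⟨h.hom₂, h.hom₁, h.mem_f, h.mem_e, h.map₂, h.map₁, h.comp₂₁, h.comp₁₂⟩

theorem IsHomPair.mem_comap (h : Λ.IsHomPair m₁ m₂ e f) (he : e ∈ ξ) : f ∈ Λ.comap m₁ ξ :=
  ⟨h.mem_f, h.map₁ ▸ he⟩

theorem IsHomPair.isFilterES_comap (hΛ : Λ.IsLS) (h : Λ.IsHomPair m₁ m₂ e f)
    (hξ : Λ.IsFilterES ξ) (he : e ∈ ξ) : Λ.IsFilterES (Λ.comap m₁ ξ) :=
  h.hom₁.isFilterES_comap hΛ hξ h.mem_f (h.map₁ ▸ he)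

theorem IsHomPair.comap_comap (h : Λ.IsHomPair m₁ m₂ e f) (hξ : Λ.IsFilterES ξ)
    (he : e ∈ ξ) : Λ.comap m₂ (Λ.comap m₁ ξ) = ξ := by
  ext x
  constructor
  · rintro ⟨hx, -, hx'⟩
    rw [h.comp₁₂ x hx] at hx'
    exact hξ.mem_of_tmul_mem hx h.mem_e hx'
  · intro hx
    have hxE := hξ.mem_ESet hx
    refine ⟨hxE, h.hom₂.mapsTo x hxE, ?_⟩
    rw [h.comp₁₂ x hxE]
    exact hξ.2.2.1 _ hx _ he

theorem IsHomPair.isUltraES_comap (hΛ : Λ.IsLS) (h : Λ.IsHomPair m₁ m₂ e f)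
    (hξ : Λ.IsUltraES ξ) (he : e ∈ ξ) : Λ.IsUltraES (Λ.comap m₁ ξ) := by
  refine ⟨h.isFilterES_comap hΛ hξ.1 he, fun ζ hζ hsub => ?_⟩
  have hf : f ∈ ζ := hsub (h.mem_comap he)
  have hξζ : ξ = Λ.comap m₂ ζ := by
    refine hξ.2 _ (h.symm.isFilterES_comap hΛ hζ hf) ?_
    calc ξ = Λ.comap m₂ (Λ.comap m₁ ξ) := (h.comap_comap hξ.1 he).symm
      _ ⊆ Λ.comap m₂ ζ := comap_mono hsub
  rw [hξζ, h.symm.comap_comap hζ hf]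

/-- The characters of ultrafilters through `e` are dense around `charOf ξ`, and `charComap m₁`
is continuous and sends them to characters of ultrafilters. -/
theorem IsHomPair.isTightFilter_comap (hΛ : Λ.IsLS) (h : Λ.IsHomPair m₁ m₂ e f)
    (hξ : Λ.IsTightFilter ξ) (he : e ∈ ξ) : Λ.IsTightFilter (Λ.comap m₁ ξ) := by
  have hF := h.isFilterES_comap hΛ hξ.1 he
  refine ⟨hF, hF.isChar_charOf, ?_⟩
  rw [charOf_comap]
  have hclosure : Λ.charOf ξ ∈ closure ({φ | φ e = true} ∩
      {φ | ∃ ζ, Λ.IsUltraES ζ ∧ φ = Λ.charOf ζ}) :=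
    (isOpen_setOf_apply_eq_true e).inter_closure ⟨charOf_eq_true.2 he, hξ.2.2⟩
  refine closure_mono ?_ (image_closure_subset_closure_image continuous_charComap
    ⟨_, hclosure, rfl⟩)
  rintro _ ⟨_, ⟨hζe, ζ, hζ, rfl⟩, rfl⟩
  exact ⟨_, h.isUltraES_comap hΛ hζ (charOf_eq_true.1 hζe), charOf_comap.symm⟩

theorem TightT.carrier_injective : Function.Injective (TightT.carrier (Λ := Λ)) := by
  rintro ⟨_, _⟩ ⟨_, _⟩ rfl
  rfl

theorem continuous_charOf_carrier : Continuous fun ξ : Λ.TightT => Λ.charOf ξ.carrier :=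
  continuous_induced_dom

theorem isOpen_setOf_mem_carrier (t : Tr V A) : IsOpen {ξ : Λ.TightT | t ∈ ξ.carrier} := by
  have h := (isOpen_setOf_apply_eq_true t).preimage (continuous_charOf_carrier (Λ := Λ))
  simpa only [Set.preimage_ofPred_eq, charOf_eq_true] using h

def IsHomPair.tightMap (hΛ : Λ.IsLS) (h : Λ.IsHomPair m₁ m₂ e f) :
    {ξ : Λ.TightT // e ∈ ξ.carrier} → {ξ : Λ.TightT // f ∈ ξ.carrier} :=
  fun ξ => ⟨⟨Λ.comap m₁ ξ.1.carrier, h.isTightFilter_comap hΛ ξ.1.tight ξ.2⟩, h.mem_comap ξ.2⟩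

theorem IsHomPair.continuous_tightMap (hΛ : Λ.IsLS) (h : Λ.IsHomPair m₁ m₂ e f) :
    Continuous (h.tightMap hΛ) := by
  refine (continuous_induced_rng.2 ?_).subtype_mk _
  simp only [Function.comp_def, charOf_comap]
  exact continuous_charComap.comp (continuous_charOf_carrier.comp continuous_subtype_val)

def IsHomPair.tightHomeomorph (hΛ : Λ.IsLS) (h : Λ.IsHomPair m₁ m₂ e f) :
    {ξ : Λ.TightT // e ∈ ξ.carrier} ≃ₜ {ξ : Λ.TightT // f ∈ ξ.carrier} where
  toFun := h.tightMap hΛ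
  invFun := h.symm.tightMap hΛ
  left_inv ξ := Subtype.ext (TightT.carrier_injective (h.comap_comap ξ.1.tight.1 ξ.2))
  right_inv η := Subtype.ext (TightT.carrier_injective (h.symm.comap_comap η.1.tight.1 η.2))
  continuous_toFun := h.continuous_tightMap hΛ
  continuous_invFun := h.symm.continuous_tightMap hΛ

end Homomorphisms

/-- `comap (cutE a)` is the cutting map `H_{[a]}` (`Hcut_eq_comap_cutE`), and `comap (glueE a)`
its inverse, the gluing map `G_{(a)}`. -/
noncomputable def cutE (a : A) : Tr V A → Tr V A
  | .zero => .zero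
  | .mk δ B _ => Tr.idem (a :: δ) (B ∩ Λ.rangeL (a :: δ))

noncomputable def glueE (a : A) : Tr V A → Tr V A
  | .zero => .zero
  | .mk [] B _ => Tr.idem [] (Λ.relRange B [a])
  | .mk (b :: δ) D _ => if b = a then Tr.idem δ D else .zero

section CutAndGlue

variable {Λ}

theorem rangeL_cons_subset (a : A) (δ : List A) : Λ.rangeL (a :: δ) ⊆ Λ.rangeL δ :=
  (rangeL_append [a] δ).trans_subset (relRange_subset_rangeL _ δ)

theorem cutE_idem (a : A) (δ : List A) (X : Set V) :
    Λ.cutE a (Tr.idem δ X) = Tr.idem (a :: δ) (X ∩ Λ.rangeL (a :: δ)) := by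
  by_cases hX : X.Nonempty
  · rw [Tr.idem_of_nonempty hX]
    rfl
  · rw [Tr.idem_of_not_nonempty hX,
      Tr.idem_of_not_nonempty fun h => hX (h.mono Set.inter_subset_left)]
    rfl

theorem glueE_idem_nil (a : A) (X : Set V) :
    Λ.glueE a (Tr.idem [] X) = Tr.idem [] (Λ.relRange X [a]) := by
  by_cases hX : X.Nonempty
  · rw [Tr.idem_of_nonempty hX]
    rfl
  · rw [Tr.idem_of_not_nonempty hX, Set.not_nonempty_iff_eq_empty.1 hX, relRange_empty,
      Tr.idem_of_not_nonempty Set.not_nonempty_empty]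
    rfl

theorem glueE_idem_cons (a b : A) (δ : List A) (X : Set V) :
    Λ.glueE a (Tr.idem (b :: δ) X) = if b = a then Tr.idem δ X else .zero := by
  by_cases hX : X.Nonempty
  · rw [Tr.idem_of_nonempty hX]
    rfl
  · rw [Tr.idem_of_not_nonempty hX, Tr.idem_of_not_nonempty hX, ite_self]
    rfl

theorem isESHom_cutE (hΛ : Λ.IsWLR) (a : A) : Λ.IsESHom (Λ.cutE a) := by
  refine IsESHom.of_prefix rfl ?_ ?_ ?_
  · rintro e (rfl | ⟨δ, B, rfl, -, ⟨hB, -⟩, -⟩)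
    · exact Or.inl rfl
    refine idem_mem_ESet (fun hne => hΛ.toIsLS.inter_mem _ hB _ ?_) Set.inter_subset_right
    exact rangeL_mem hΛ.toIsLS (List.cons_ne_nil _ _) (hne.mono Set.inter_subset_right)
  · intro β γ B C h hB _
    have hγ : β ++ γ.drop β.length = γ := List.prefix_iff_eq_append.1 h
    rw [tmul_mk_of_prefix h, cutE_idem]
    change _ = Λ.tmul (Tr.idem (a :: β) _) (Tr.idem (a :: γ) _)
    rw [tmul_idem_of_prefix (List.cons_prefix_cons.2 ⟨rfl, h⟩), List.length_cons,
      List.drop_succ_cons, relRange_inter_rangeL hΛ (mk_mem_ESet_iff.1 hB).2.2.1,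
      List.cons_append, hγ]
    congr 1
    ext
    simp only [Set.mem_inter_iff]
    tauto
  · intro β γ B C h h' _ _
    exact tmul_idem_of_not_prefix (fun h'' => h (List.cons_prefix_cons.1 h'').2)
      (fun h'' => h' (List.cons_prefix_cons.1 h'').2) _ _

theorem isESHom_glueE (hΛ : Λ.IsWLR) (a : A) : Λ.IsESHom (Λ.glueE a) := by
  refine IsESHom.of_prefix rfl ?_ ?_ ?_
  · rintro e (rfl | ⟨_ | ⟨b, δ⟩, B, rfl, -, ⟨hB, hBr⟩, -⟩)
    · exact Or.inl rfl
    · refine idem_mem_ESet (fun hne => relRange_mem hΛ.toIsLS hB hne) ?_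
      rw [rangeL_nil]
      exact Set.subset_univ _
    · change (if b = a then _ else _) ∈ _
      split_ifs
      · exact idem_mem_ESet (fun _ => hB) (hBr.trans (rangeL_cons_subset b δ))
      · exact Or.inl rfl
  · intro β γ B C h hB hC
    have hB𝒜 := (mk_mem_ESet_iff.1 hB).2.2.1
    rw [tmul_mk_of_prefix h]
    rcases β with _ | ⟨b, β⟩
    · rcases γ with _ | ⟨c, γ⟩
      · change _ = Λ.tmul (Tr.idem [] _) (Tr.idem [] _)
        rw [tmul_idem_of_prefix h, List.drop_nil, relRange_nil, relRange_nil, glueE_idem_nil,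
          relRange_inter hΛ hB𝒜 (mk_mem_ESet_iff.1 hC).2.2.1]
      · change _ = Λ.tmul (Tr.idem [] _) (if c = a then _ else _)
        rw [List.length_nil, List.drop_zero, glueE_idem_cons]
        split_ifs with hc
        · rw [tmul_idem_of_prefix List.nil_prefix, List.length_nil, List.drop_zero,
            ← relRange_append, hc]
          rfl
        · rw [tmul_zero_right]
    · rcases γ with _ | ⟨c, γ⟩
      · exact absurd h.length_le (by simp)
      obtain ⟨rfl, hβγ⟩ := List.cons_prefix_cons.1 h
      change _ = Λ.tmul (if b = a then _ else _) (if b = a then _ else _)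
      rw [List.length_cons, List.drop_succ_cons, glueE_idem_cons]
      split_ifs
      · rw [tmul_idem_of_prefix hβγ]
      · rw [tmul_zero_left]
  · rintro (_ | ⟨b, β⟩) (_ | ⟨c, γ⟩) B C h h' _ _
    · exact absurd List.nil_prefix h
    · exact absurd List.nil_prefix h
    · exact absurd List.nil_prefix h'
    change Λ.tmul (if b = a then _ else _) (if c = a then _ else _) = _
    split_ifs with hb hc
    · subst hb hc
      exact tmul_idem_of_not_prefix (fun h'' => h (List.cons_prefix_cons.2 ⟨rfl, h''⟩))
        (fun h'' => h' (List.cons_prefix_cons.2 ⟨rfl, h''⟩)) _ _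
    · rw [tmul_zero_right]
    · rw [tmul_zero_left]
    · rw [tmul_zero_left]

theorem isHomPair_cutE_glueE (hΛ : Λ.IsWLR) (a : A) :
    Λ.IsHomPair (Λ.cutE a) (Λ.glueE a) (.mk [a] (Λ.rangeL [a]) [a]) (.mk [] (Λ.rangeL [a]) []) := by
  have hne := rangeL_singleton_nonempty (Λ := Λ) a
  have hmem := rangeL_mem hΛ.toIsLS (List.cons_ne_nil a []) hne
  refine ⟨isESHom_cutE hΛ a, isESHom_glueE hΛ a,
    mk_mem_ESet_iff.2 ⟨rfl, mem_LStar_of_relRange_nonempty hne, hmem, subset_rfl, hne⟩,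
    mk_mem_ESet_iff.2 ⟨rfl, Or.inl rfl, hmem, by rw [rangeL_nil]; exact Set.subset_univ _, hne⟩,
    ?_, ?_, ?_, ?_⟩
  · change Tr.idem [a] (Λ.rangeL [a] ∩ Λ.rangeL [a]) = _
    rw [Set.inter_self, Tr.idem_of_nonempty hne]
  · change (if a = a then _ else _) = _
    rw [if_pos rfl, Tr.idem_of_nonempty hne]
  · rintro x (rfl | ⟨_ | ⟨b, δ⟩, B, rfl, -⟩)
    · rfl
    · change Λ.cutE a (Tr.idem [] _) = _
      rw [cutE_idem, tmul_mk_of_prefix List.nil_prefix, List.length_nil, List.drop_zero]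
    · change Λ.cutE a (if b = a then _ else _) = _
      split_ifs with hb
      · subst hb
        rw [cutE_idem, tmul_mk_of_prefix' (List.cons_prefix_cons.2 ⟨rfl, List.nil_prefix⟩),
          List.length_cons, List.length_nil, List.drop_succ_cons, List.drop_zero,
          ← rangeL_append]
        rfl
      · rw [tmul_mk_of_not_prefix (fun h => hb (List.cons_prefix_cons.1 h).1)
          (fun h => hb (List.cons_prefix_cons.1 h).1.symm)]
        rfl
  · rintro x (rfl | ⟨δ, B, rfl, -⟩)
    · rfl
    · change Λ.glueE a (Tr.idem (a :: δ) _) = _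
      rw [glueE_idem_cons, if_pos rfl, tmul_mk_of_prefix' List.nil_prefix, List.length_nil,
        List.drop_zero, ← rangeL_append]
      rfl

theorem Hcut_eq_comap_cutE (hΛ : Λ.IsLS) {ξ : Set (Tr V A)} (hξ : Λ.IsFilterES ξ) (a : A) :
    Λ.Hcut [a] ξ = Λ.comap (Λ.cutE a) ξ := by
  ext t
  rw [Hcut, if_neg (List.cons_ne_nil a [])]
  constructor
  · rintro ⟨δ, B, rfl, ⟨hB, hBr⟩, D, hD, hDB⟩
    obtain ⟨-, -, -, hDr, hDne⟩ := hξ.of_mk_mem hD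
    have hDB' : D ⊆ B ∩ Λ.rangeL (a :: δ) := Set.subset_inter hDB hDr
    have hne := hDne.mono hDB'
    refine ⟨mk_mem_ESet_iff.2 ⟨rfl, mem_LStar_of_relRange_nonempty
      ((hne.mono Set.inter_subset_left).mono hBr), hB, hBr, hne.mono Set.inter_subset_left⟩, ?_⟩
    change Tr.idem _ _ ∈ ξ
    rw [Tr.idem_of_nonempty hne]
    refine hξ.mem_of_superset hD (hΛ.inter_mem _ hB _ ?_) hDB' Set.inter_subset_right
    exact rangeL_mem hΛ (List.cons_ne_nil _ _) (hne.mono Set.inter_subset_right)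
  · rintro ⟨ht | ⟨δ, B, rfl, -, ⟨hB, hBr⟩, -⟩, hmt⟩
    · subst ht
      exact absurd hmt hξ.zero_not_mem
    · exact ⟨δ, B, rfl, ⟨hB, hBr⟩, _, hξ.mk_mem_of_idem_mem hmt, Set.inter_subset_left⟩

end CutAndGlue

section Words

variable {Λ}

theorem mem_iff_prefix_of_isChain_of_longest {P : Set (List A)}
    (hchain : IsChain (· <+: ·) P) (hdown : ∀ β ∈ P, ∀ γ, γ ≠ [] → γ <+: β → γ ∈ P)
    {βs : List A} (hs : βs ∈ P) (hmax : ∀ β ∈ P, β.length ≤ βs.length) {β : List A}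
    (hβ : β ≠ []) : β ∈ P ↔ β <+: βs := by
  refine ⟨fun hβP => ?_, hdown βs hs β hβ⟩
  rcases hchain.total hβP hs with h | h
  · exact h
  · rw [h.eq_of_length (le_antisymm h.length_le (hmax β hβP))]

theorem exists_seq_mem_iff_of_isChain_of_unbounded {P : Set (List A)}
    (hchain : IsChain (· <+: ·) P) (hdown : ∀ β ∈ P, ∀ γ, γ ≠ [] → γ <+: β → γ ∈ P)
    (hunb : ∀ n : ℕ, ∃ β ∈ P, n < β.length) :
    ∃ f : ℕ → A, ∀ β : List A, β ≠ [] → (β ∈ P ↔ β = List.ofFn fun i : Fin β.length => f i) := by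
  choose g hgP hglen using hunb
  have hagree : ∀ β ∈ P, ∀ i (hi : i < β.length), β[i] = (g i)[i]'(hglen i) := by
    intro β hβ i hi
    rcases hchain.total hβ (hgP i) with h | h
    · exact h.getElem hi
    · exact (h.getElem (hglen i)).symm
  refine ⟨fun n => (g n)[n]'(hglen n), fun β hβ => ⟨fun hβP => ?_, fun h => ?_⟩⟩
  · exact List.ext_getElem (by simp) fun i hi _ => by rw [List.getElem_ofFn, hagree β hβP i hi]
  · refine hdown _ (hgP β.length) β hβ (List.prefix_iff_getElem.2 ⟨(hglen _).le, fun i hi => ?_⟩)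
    rw [List.getElem_of_eq h hi, List.getElem_ofFn, hagree _ (hgP _) i]

theorem exists_word_of_isChain {P : Set (List A)} (hchain : IsChain (· <+: ·) P)
    (hdown : ∀ β ∈ P, ∀ γ, γ ≠ [] → γ <+: β → γ ∈ P) {β₀ : List A} (hβ₀ : β₀ ∈ P)
    (hne : β₀ ≠ []) :
    ∃ α : Word A, (∀ β : List A, β ≠ [] → (β ∈ P ↔ WPrefix β α)) ∧ 1 ≤ wlength α := by
  by_cases hbdd : ∃ N, ∀ β ∈ P, β.length ≤ N
  · obtain ⟨N, hN⟩ := hbdd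
    have hbdd' : BddAbove (List.length '' P) := ⟨N, by rintro _ ⟨β, hβ, rfl⟩; exact hN β hβ⟩
    obtain ⟨βs, hs, hlen⟩ := Nat.sSup_mem (Set.Nonempty.image List.length ⟨β₀, hβ₀⟩) hbdd'
    have hmax : ∀ β ∈ P, β.length ≤ βs.length :=
      fun β hβ => hlen ▸ le_csSup hbdd' ⟨β, hβ, rfl⟩
    refine ⟨Sum.inl βs, fun β hβ => mem_iff_prefix_of_isChain_of_longest hchain hdown hs hmax hβ,
      ?_⟩
    have : 1 ≤ βs.length := (List.length_pos_iff.2 hne).trans_le (hmax β₀ hβ₀)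
    simpa [wlength] using this
  · push Not at hbdd
    obtain ⟨f, hf⟩ := exists_seq_mem_iff_of_isChain_of_unbounded hchain hdown hbdd
    exact ⟨Sum.inr f, hf, le_top⟩

variable {ξ : Set (Tr V A)}

theorem IsFilterES.mk_rangeL_mem_of_prefix (hΛ : Λ.IsLS) (hξ : Λ.IsFilterES ξ)
    {β γ : List A} {B : Set V} (hB : Tr.mk β B β ∈ ξ) (hγ : γ ≠ []) (hγβ : γ <+: β) :
    Tr.mk γ (Λ.rangeL γ) γ ∈ ξ := by
  obtain ⟨-, -, -, hBr, hBne⟩ := hξ.of_mk_mem hB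
  have hβ : Λ.rangeL β = Λ.relRange (Λ.rangeL γ) (β.drop γ.length) := by
    rw [← rangeL_append, List.prefix_iff_eq_append.1 hγβ]
  rw [hβ] at hBr
  exact hξ.mem_of_le hB (rangeL_mem hΛ hγ (nonempty_of_relRange_nonempty (hBne.mono hBr)))
    subset_rfl hγβ hBr

theorem IsFilterES.exists_hasWord (hΛ : Λ.IsLS) (hξ : Λ.IsFilterES ξ) {a : A}
    (ha : Tr.mk [a] (Λ.rangeL [a]) [a] ∈ ξ) : ∃ α : Word A, Λ.HasWord ξ α ∧ 1 ≤ wlength α := by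
  obtain ⟨α, hα, hlen⟩ := exists_word_of_isChain (P := {β | β ≠ [] ∧ ∃ B, Tr.mk β B β ∈ ξ})
    (fun β ⟨_, _, hB⟩ γ ⟨_, _, hC⟩ _ => hξ.prefix_or_prefix hB hC)
    (fun β ⟨_, _, hB⟩ γ hγ hγβ => ⟨hγ, _, hξ.mk_rangeL_mem_of_prefix hΛ hB hγ hγβ⟩)
    ⟨List.cons_ne_nil a [], _, ha⟩ (List.cons_ne_nil a [])
  exact ⟨α, fun β hβ => by simpa [hβ] using hα β hβ, hlen⟩

theorem IsFilterES.exists_mk_rangeL_mem_of_hasWord (hΛ : Λ.IsLS) (hξ : Λ.IsFilterES ξ)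
    {α : Word A} (hα : Λ.HasWord ξ α) (hlen : 1 ≤ wlength α) :
    ∃ a : A, Tr.mk [a] (Λ.rangeL [a]) [a] ∈ ξ := by
  obtain ⟨a, ha⟩ : ∃ a : A, WPrefix [a] α := by
    rcases α with (_ | ⟨a, l⟩) | f
    · simp [wlength] at hlen
    · exact ⟨a, List.cons_prefix_cons.2 ⟨rfl, List.nil_prefix⟩⟩
    · exact ⟨f 0, by simp [WPrefix]⟩
  obtain ⟨B, hB⟩ := (hα [a] (List.cons_ne_nil a [])).2 ha
  exact ⟨a, hξ.mk_rangeL_mem_of_prefix hΛ hB (List.cons_ne_nil a []) (List.prefix_refl _)⟩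

end Words

/-- (i) `T^{(1)} = {ξ^α ∈ T : |α| ≥ 1}` is open in `T`, and equals
`⋃_{a ∈ A} V_{(a, r(a), a)}`; (ii) the shift `σ(ξ^{aγ}) = H_{[a]γ}(ξ^{aγ})` is a local
homeomorphism: for each letter `a`, its restriction to `V_{(a, r(a), a)}` is a
homeomorphism onto `V_{(ω, r(a), ω)}`. -/
theorem statement_5 (hΛ : Λ.IsNormal) :
    IsOpen {ξ : Λ.TightT | ∃ α : Word A, Λ.HasWord ξ.carrier α ∧ 1 ≤ wlength α} ∧
    ({ξ : Λ.TightT | ∃ α : Word A, Λ.HasWord ξ.carrier α ∧ 1 ≤ wlength α} =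
      ⋃ a : A, {ξ : Λ.TightT | Tr.mk [a] (Λ.rangeL [a]) [a] ∈ ξ.carrier}) ∧
    ∀ a : A, ∃ e : {ξ : Λ.TightT // Tr.mk [a] (Λ.rangeL [a]) [a] ∈ ξ.carrier} ≃ₜ
        {ξ : Λ.TightT // Tr.mk [] (Λ.rangeL [a]) [] ∈ ξ.carrier},
      ∀ ξ, (e ξ).val.carrier = Λ.Hcut [a] ξ.val.carrier := by
  have hLS : Λ.IsLS := hΛ.toIsWLR.toIsLS
  have hT1 : {ξ : Λ.TightT | ∃ α : Word A, Λ.HasWord ξ.carrier α ∧ 1 ≤ wlength α} =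
      ⋃ a : A, {ξ : Λ.TightT | Tr.mk [a] (Λ.rangeL [a]) [a] ∈ ξ.carrier} := by
    ext ξ
    simp only [Set.mem_ofPred_eq, Set.mem_iUnion]
    exact ⟨fun ⟨_, hα, hlen⟩ => ξ.tight.1.exists_mk_rangeL_mem_of_hasWord hLS hα hlen,
      fun ⟨_, ha⟩ => ξ.tight.1.exists_hasWord hLS ha⟩
  refine ⟨hT1 ▸ isOpen_iUnion fun a => isOpen_setOf_mem_carrier _, hT1, fun a => ?_⟩
  exact ⟨(isHomPair_cutE_glueE hΛ.toIsWLR a).tightHomeomorph hLS,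
    fun ξ => (Hcut_eq_comap_cutE hLS ξ.1.tight.1 a).symm⟩

end LblSp
end
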